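/- arXiv:2010.15988 — 6 statements merged into one kernel-verified Lean document; each statement's English description precedes it below -/
import Mathlib

section
/- Let g = q₁⋯q_r be odd squarefree with r prime factors, d even, and gcd(g,d) = 1. For ε₁, ε₂ ∈ {±1}, the number of residues 1 ≤ α ≤ g with Jacobi symbols (α/g) = ε₁ and ((α+d)/g) = ε₂ equals (1/4)·[|φ_d(g)| + (-1)^r·(ε₁·((-d)/g) + ε₂·(d/g) + ε₁ε₂)]. -/
/-!
Write `χ` for the Jacobi symbol modulo `g`. For `ε = ±1` the quantity `χ(α)² + εχ(α)` is twice
the indicator of `χ(α) = ε`, and `χ(α)²χ(α + d)²` is the indicator of `α ∈ φ_d(g)`. Multiplying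
out, `4 |Φ_{ε₁,ε₂}(g,d)|` is `|φ_d(g)|` plus a combination of the correlation sums
`∑_α χ(α)^a χ(α + d)^b` with `(a, b) = (2,1), (1,2), (1,1)`. These sums are multiplicative in `g`
by the Chinese remainder theorem, and at a prime `q` they are sums of the quadratic character of
`𝔽_q`: the `(1,1)` sum is `χ(-1)` times a Jacobi sum, hence `-1`, while the other two reduce to
`∑ χ = 0` and give `-(d/q)` and `-(-d/q)`.
-/

open Finset

section QuadraticChar

variable {F : Type*} [Field F] [Fintype F] [DecidableEq F]

lemma quadraticChar_sum_mul_add_eq_neg_one (hF : ringChar F ≠ 2) {δ : F} (hδ : δ ≠ 0) :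
    ∑ x, quadraticChar F x * quadraticChar F (x + δ) = -1 := by
  set χ := quadraticChar F
  have hjac : jacobiSum χ χ = -χ (-1) := by
    simpa only [(quadraticChar_isQuadratic F).inv] using
      jacobiSum_nontrivial_inv (quadraticChar_ne_one hF)
  have hδ2 : χ δ ^ 2 = 1 := quadraticChar_sq_one hδ
  have hneg2 : χ (-1) ^ 2 = 1 := quadraticChar_sq_one (neg_ne_zero.mpr one_ne_zero)
  -- substitute `x = δ t - δ`, which turns the sum into `χ (-1) J(χ, χ)`
  calc ∑ x, χ x * χ (x + δ)
      = ∑ t, χ (δ * t - δ) * χ (δ * t - δ + δ) :=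
        (Fintype.sum_equiv ((Equiv.mulLeft₀ δ hδ).trans (Equiv.subRight δ)) _ _
          fun _ => rfl).symm
    _ = ∑ t, χ (-1) * (χ t * χ (1 - t)) := by
        refine sum_congr rfl fun t _ => ?_
        have h₁ : δ * t - δ = δ * (-1 * (1 - t)) := by ring
        have h₂ : δ * t - δ + δ = δ * t := by ring
        rw [h₂, h₁, map_mul, map_mul, map_mul]
        linear_combination (χ (-1) * χ (1 - t) * χ t) * hδ2
    _ = -1 := by
        rw [← mul_sum]
        change χ (-1) * jacobiSum χ χ = -1
        rw [hjac]
        linear_combination -hneg2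

lemma quadraticChar_sum_sq_mul_add (hF : ringChar F ≠ 2) (δ : F) :
    ∑ x, quadraticChar F x ^ 2 * quadraticChar F (x + δ) = -quadraticChar F δ := by
  set χ := quadraticChar F
  have hsq : ∀ x, χ x ^ 2 * χ (x + δ) = χ (x + δ) - if x = 0 then χ δ else 0 := by
    intro x
    by_cases hx : x = 0
    · simp [hx, χ]
    · rw [quadraticChar_sq_one hx, one_mul, if_neg hx, sub_zero]
  have hshift : ∑ x, χ (x + δ) = 0 :=
    (Equiv.sum_comp (Equiv.addRight δ) χ).trans (quadraticChar_sum_zero hF)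
  simp only [hsq, sum_sub_distrib, hshift, Fintype.sum_ite_eq', zero_sub]

lemma quadraticChar_sum_mul_add_sq (hF : ringChar F ≠ 2) (δ : F) :
    ∑ x, quadraticChar F x * quadraticChar F (x + δ) ^ 2 = -quadraticChar F (-δ) := by
  rw [← quadraticChar_sum_sq_mul_add hF (-δ), ← (Equiv.subRight δ).sum_comp]
  refine sum_congr rfl fun x _ => ?_
  simp only [Equiv.subRight_apply, sub_add_cancel, ← sub_eq_add_neg]
  ring

end QuadraticChar

lemma sum_range_eq_sum_zmod_val {R : Type*} [AddCommMonoid R] (n : ℕ) [NeZero n] (f : ℕ → R) :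
    ∑ k ∈ range n, f k = ∑ x : ZMod n, f x.val := by
  obtain ⟨m, rfl⟩ := Nat.exists_eq_succ_of_ne_zero (NeZero.ne n)
  exact sum_range f

lemma Function.Periodic.sum_Icc_one_eq_sum_range {R : Type*} [AddCommMonoid R] {f : ℕ → R}
    {n : ℕ} (hf : Function.Periodic f n) : ∑ k ∈ Icc 1 n, f k = ∑ k ∈ range n, f k := by
  rw [← Ico_add_one_right_eq_Icc, sum_Ico_eq_sum_range, Nat.add_sub_cancel]
  cases n with
  | zero => simp
  | succ m =>
    have hperiod : f (m + 1) = f 0 := by simpa using hf 0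
    simp only [add_comm 1]
    rw [sum_range_succ, sum_range_succ', hperiod]

lemma Nat.Coprime.sum_range_mul_of_periodic {R : Type*} [CommSemiring R] {m n : ℕ}
    (h : m.Coprime n) {f g : ℕ → R} (hf : Function.Periodic f m) (hg : Function.Periodic g n) :
    ∑ k ∈ range (m * n), f k * g k = (∑ k ∈ range m, f k) * ∑ k ∈ range n, g k := by
  rcases eq_or_ne m 0 with rfl | hm
  · simp
  rcases eq_or_ne n 0 with rfl | hn
  · simp
  have : NeZero m := ⟨hm⟩
  have : NeZero n := ⟨hn⟩
  have hval : ∀ (l : ℕ) (x : ZMod (m * n)), (ZMod.cast x : ZMod l).val = x.val % l :=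
    fun _ x => by rw [← ZMod.natCast_val, ZMod.val_natCast]
  rw [sum_range_eq_sum_zmod_val, sum_range_eq_sum_zmod_val, sum_range_eq_sum_zmod_val,
    sum_mul_sum, ← Fintype.sum_prod_type']
  refine Fintype.sum_equiv (ZMod.chineseRemainder h) _ _ fun x => ?_
  have h1 : (ZMod.chineseRemainder h x).1 = ZMod.cast x := by simp [ZMod.chineseRemainder]
  have h2 : (ZMod.chineseRemainder h x).2 = ZMod.cast x := by simp [ZMod.chineseRemainder]
  simp only [EquivLike.coe_coe]
  rw [h1, h2, hval, hval, hf.map_mod_nat, hg.map_mod_nat]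

lemma ArithmeticFunction.IsMultiplicative.eq_prod_primeFactors_of_squarefree {R : Type*}
    [CommMonoidWithZero R] {f : ArithmeticFunction R} (hf : f.IsMultiplicative) {n : ℕ}
    (hn : Squarefree n) : f n = ∏ p ∈ n.primeFactors, f p := by
  rw [hf.multiplicative_factorization f hn.ne_zero, Nat.prod_factorization_eq_prod_primeFactors]
  refine prod_congr rfl fun p hp => ?_
  rw [Nat.factorization_eq_one_of_squarefree hn (Nat.prime_of_mem_primeFactors hp)
    (Nat.dvd_of_mem_primeFactors hp), pow_one]

lemma jacobiSym_add_self (a : ℤ) (n : ℕ) : jacobiSym (a + n) n = jacobiSym a n :=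
  jacobiSym.mod_left' (Int.add_emod_right a n)

lemma jacobiSym_sq (a : ℤ) (n : ℕ) [NeZero n] :
    jacobiSym a n ^ 2 = if a.gcd n = 1 then 1 else 0 := by
  split_ifs with h
  · exact jacobiSym.sq_one h
  · rw [jacobiSym.eq_zero_iff_not_coprime.mpr h, zero_pow two_ne_zero]

lemma jacobiSym_sq_add_mul_eq_ite (a : ℤ) (n : ℕ) {ε : ℤ} (hε : ε = 1 ∨ ε = -1) :
    jacobiSym a n ^ 2 + ε * jacobiSym a n = if jacobiSym a n = ε then 2 else 0 := by
  rcases jacobiSym.trichotomy a n with h | h | h <;> rcases hε with rfl | rfl <;> norm_num [h]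

lemma jacobiSym_eq_prod_primeFactors (a : ℤ) {n : ℕ} (hn : Squarefree n) :
    jacobiSym a n = ∏ q ∈ n.primeFactors, jacobiSym a q := by
  conv_lhs => rw [← Nat.prod_primeFactors_of_squarefree hn, ← prod_toList]
  rw [jacobiSym.list_prod_right fun q hq =>
    (Nat.prime_of_mem_primeFactors (mem_toList.mp hq)).ne_zero, prod_map_toList]

lemma jacobiSym_eq_quadraticChar (a : ℤ) (q : ℕ) [Fact q.Prime] :
    jacobiSym a q = quadraticChar (ZMod q) a :=
  (jacobiSym.legendreSym.to_jacobiSym q a).symm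

lemma four_mul_card_filter_jacobiSym_eq_sum (s : Finset ℕ) (n : ℕ) (c : ℤ) {ε₁ ε₂ : ℤ}
    (hε₁ : ε₁ = 1 ∨ ε₁ = -1) (hε₂ : ε₂ = 1 ∨ ε₂ = -1) :
    4 * ((s.filter fun α : ℕ => jacobiSym α n = ε₁ ∧ jacobiSym (α + c) n = ε₂).card : ℤ) =
      ∑ α ∈ s, (jacobiSym α n ^ 2 + ε₁ * jacobiSym α n) *
        (jacobiSym (α + c) n ^ 2 + ε₂ * jacobiSym (α + c) n) := by
  simp only [card_filter, Nat.cast_sum, Nat.cast_ite, Nat.cast_one, Nat.cast_zero, mul_sum,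
    jacobiSym_sq_add_mul_eq_ite _ _ hε₁, jacobiSym_sq_add_mul_eq_ite _ _ hε₂,
    ite_zero_mul_ite_zero, mul_boole]
  norm_num

lemma card_filter_coprime_eq_sum_jacobiSym_sq (s : Finset ℕ) (n : ℕ) [NeZero n] (c : ℕ) :
    ((s.filter fun α => Nat.gcd α n = 1 ∧ Nat.gcd (α + c) n = 1).card : ℤ) =
      ∑ α ∈ s, jacobiSym α n ^ 2 * jacobiSym (α + c) n ^ 2 := by
  simp only [card_filter, Nat.cast_sum, Nat.cast_ite, Nat.cast_one, Nat.cast_zero, jacobiSym_sq,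
    ← Nat.cast_add, Int.gcd_natCast_natCast, ite_zero_mul_ite_zero, mul_one]

def jacobiCorrelation (a b : ℕ) (d : ℤ) : ArithmeticFunction ℤ where
  toFun n := ∑ k ∈ range n, jacobiSym k n ^ a * jacobiSym (k + d) n ^ b
  map_zero' := rfl

namespace jacobiCorrelation

variable (a b : ℕ) (d : ℤ)

lemma apply (n : ℕ) :
    jacobiCorrelation a b d n = ∑ k ∈ range n, jacobiSym k n ^ a * jacobiSym (k + d) n ^ b :=
  rfl

lemma summand_periodic (n : ℕ) :
    Function.Periodic (fun k : ℕ => jacobiSym k n ^ a * jacobiSym (k + d) n ^ b) n := by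
  intro k
  simp only [Nat.cast_add, add_right_comm _ (n : ℤ), jacobiSym_add_self]

lemma isMultiplicative : (jacobiCorrelation a b d).IsMultiplicative := by
  refine ArithmeticFunction.IsMultiplicative.iff_ne_zero.mpr
    ⟨by simp [apply, jacobiSym.one_right], fun {m n} hm hn hmn => ?_⟩
  rw [apply, apply, apply,
    ← hmn.sum_range_mul_of_periodic (summand_periodic a b d m) (summand_periodic a b d n)]
  refine sum_congr rfl fun k _ => ?_
  rw [jacobiSym.mul_right' _ hm hn, jacobiSym.mul_right' _ hm hn]
  ring

lemma apply_prime (q : ℕ) [Fact q.Prime] :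
    jacobiCorrelation a b d q =
      ∑ x : ZMod q, quadraticChar (ZMod q) x ^ a * quadraticChar (ZMod q) (x + d) ^ b := by
  rw [apply, sum_range_eq_sum_zmod_val]
  refine Fintype.sum_congr _ _ fun x => ?_
  simp only [jacobiSym_eq_quadraticChar, Int.cast_add, Int.cast_natCast, ZMod.natCast_zmod_val]

variable {q : ℕ} [Fact q.Prime]

lemma one_one_prime (hq : q ≠ 2) (hqd : ¬ (q : ℤ) ∣ d) : jacobiCorrelation 1 1 d q = -1 := by
  simp only [apply_prime, pow_one]
  refine quadraticChar_sum_mul_add_eq_neg_one (by rwa [ZMod.ringChar_zmod_n]) ?_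
  rwa [Ne, ZMod.intCast_zmod_eq_zero_iff_dvd]

lemma two_one_prime (hq : q ≠ 2) : jacobiCorrelation 2 1 d q = -jacobiSym d q := by
  rw [apply_prime, jacobiSym_eq_quadraticChar]
  simp only [pow_one]
  exact quadraticChar_sum_sq_mul_add (by rwa [ZMod.ringChar_zmod_n]) _

lemma one_two_prime (hq : q ≠ 2) : jacobiCorrelation 1 2 d q = -jacobiSym (-d) q := by
  rw [apply_prime, jacobiSym_eq_quadraticChar, Int.cast_neg]
  simp only [pow_one]
  exact quadraticChar_sum_mul_add_sq (by rwa [ZMod.ringChar_zmod_n]) _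

variable {n : ℕ}

lemma eq_prod_primeFactors_of_odd (hn : Odd n) (hsf : Squarefree n) {c : ℕ → ℤ}
    (hc : ∀ q, q.Prime → q ∣ n → q ≠ 2 → jacobiCorrelation a b d q = c q) :
    jacobiCorrelation a b d n = ∏ q ∈ n.primeFactors, c q := by
  rw [(isMultiplicative a b d).eq_prod_primeFactors_of_squarefree hsf]
  refine prod_congr rfl fun q hq => ?_
  have hq' := Nat.prime_of_mem_primeFactors hq
  have hqn := Nat.dvd_of_mem_primeFactors hq
  exact hc q hq' hqn (hn.ne_two_of_dvd_nat hqn)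

lemma one_one_of_squarefree (hn : Odd n) (hsf : Squarefree n) (hcop : IsCoprime (n : ℤ) d) :
    jacobiCorrelation 1 1 d n = (-1) ^ n.primeFactors.card := by
  rw [eq_prod_primeFactors_of_odd _ _ d hn hsf (c := fun _ => -1), prod_const]
  intro q hq hqn hq2
  have : Fact q.Prime := ⟨hq⟩
  refine one_one_prime d hq2 fun hqd => ?_
  exact (Nat.prime_iff_prime_int.mp hq).not_isUnit
    (hcop.isUnit_of_dvd' (Int.natCast_dvd_natCast.mpr hqn) hqd)

lemma two_one_of_squarefree (hn : Odd n) (hsf : Squarefree n) :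
    jacobiCorrelation 2 1 d n = (-1) ^ n.primeFactors.card * jacobiSym d n := by
  rw [eq_prod_primeFactors_of_odd _ _ d hn hsf (c := fun q => -jacobiSym d q), prod_neg,
    ← jacobiSym_eq_prod_primeFactors d hsf]
  intro q hq _ hq2
  have : Fact q.Prime := ⟨hq⟩
  exact two_one_prime d hq2

lemma one_two_of_squarefree (hn : Odd n) (hsf : Squarefree n) :
    jacobiCorrelation 1 2 d n = (-1) ^ n.primeFactors.card * jacobiSym (-d) n := by
  rw [eq_prod_primeFactors_of_odd _ _ d hn hsf (c := fun q => -jacobiSym (-d) q), prod_neg,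
    ← jacobiSym_eq_prod_primeFactors (-d) hsf]
  intro q hq _ hq2
  have : Fact q.Prime := ⟨hq⟩
  exact one_two_prime d hq2

end jacobiCorrelation

theorem stmt_5_general (g d : ℕ) (hgodd : Odd g) (hgsf : Squarefree g)
    (hcop : Nat.Coprime g d)
    (ε₁ ε₂ : ℤ) (hε₁ : ε₁ = 1 ∨ ε₁ = -1) (hε₂ : ε₂ = 1 ∨ ε₂ = -1) :
    4 * (((Finset.Icc 1 g).filter
        (fun α : ℕ => jacobiSym (α : ℤ) g = ε₁ ∧ jacobiSym ((α : ℤ) + d) g = ε₂)).card : ℤ)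
      = (((Finset.Icc 1 g).filter
          (fun α => Nat.gcd α g = 1 ∧ Nat.gcd (α + d) g = 1)).card : ℤ)
        + (-1) ^ g.primeFactors.card *
            (ε₁ * jacobiSym (-(d : ℤ)) g + ε₂ * jacobiSym (d : ℤ) g + ε₁ * ε₂) := by
  have : NeZero g := ⟨hgsf.ne_zero⟩
  have hcorr : ∀ a b, ∑ α ∈ Icc 1 g, jacobiSym α g ^ a * jacobiSym (α + d) g ^ b =
      jacobiCorrelation a b d g := fun a b =>
    (jacobiCorrelation.summand_periodic a b d g).sum_Icc_one_eq_sum_range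
  -- the exponents `1` are kept so that every sum below is a value of `jacobiCorrelation`
  have hexpand : ∀ s t : ℤ, (s ^ 2 + ε₁ * s) * (t ^ 2 + ε₂ * t) =
      s ^ 2 * t ^ 2 + ε₂ * (s ^ 2 * t ^ 1) + ε₁ * (s ^ 1 * t ^ 2) + ε₁ * ε₂ * (s ^ 1 * t ^ 1) :=
    fun s t => by ring
  rw [four_mul_card_filter_jacobiSym_eq_sum _ _ _ hε₁ hε₂, card_filter_coprime_eq_sum_jacobiSym_sq]
  simp only [hexpand, sum_add_distrib, ← mul_sum, hcorr,
    jacobiCorrelation.two_one_of_squarefree _ hgodd hgsf,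
    jacobiCorrelation.one_two_of_squarefree _ hgodd hgsf,
    jacobiCorrelation.one_one_of_squarefree _ hgodd hgsf (Nat.isCoprime_iff_coprime.mpr hcop)]
  ring

theorem stmt_5 (g d : ℕ) (hgodd : Odd g) (hgsf : Squarefree g)
    (hd : 0 < d) (hde : Even d) (hcop : Nat.Coprime g d)
    (ε₁ ε₂ : ℤ) (hε₁ : ε₁ = 1 ∨ ε₁ = -1) (hε₂ : ε₂ = 1 ∨ ε₂ = -1) :
    4 * (((Finset.Icc 1 g).filter
        (fun α : ℕ => jacobiSym (α : ℤ) g = ε₁ ∧ jacobiSym ((α : ℤ) + d) g = ε₂)).card : ℤ)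
      = (((Finset.Icc 1 g).filter
          (fun α => Nat.gcd α g = 1 ∧ Nat.gcd (α + d) g = 1)).card : ℤ)
        + (-1) ^ g.primeFactors.card *
            (ε₁ * jacobiSym (-(d : ℤ)) g + ε₂ * jacobiSym (d : ℤ) g + ε₁ * ε₂) :=
  stmt_5_general g d hgodd hgsf hcop ε₁ ε₂ hε₁ hε₂
end

section
/- Let g be odd squarefree and d even. Then |Φ_{-1,-1}(g,d)| = 0 if and only if: g = 1, or (g = 5 and d ≡ 2 or 3 mod 5), or (g does not divide d but g divides 3d). -/
/-!
Let `P(m) ⊆ {±1}²` be the set of sign pairs `((x | m), (x + d | m))`. By the Chinese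
remainder theorem `P(m) P(n) ⊆ P(mn)` for coprime `m, n`, so it suffices to know `P(p)` for
the primes `p ∣ g`. If `p ∣ d`, both diagonal pairs occur. If `p ∤ d` and `p ≥ 7`, all four
pairs occur: this follows from `∑ χ(x) χ(x + d) = -1`, a Jacobi sum. For `p = 5 ∤ d` all pairs
but one diagonal pair occur, and for `p = 3 ∤ d` only one mixed pair occurs. Combining these,
`(-1, -1)` is a product of attained pairs unless `g = 1`, or `g = 5` with `d` a non-residue,
or `g = 3m` with `m ∣ d` and `3 ∤ d`; in the last case the factor at `3` forces the two signs
to differ.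
-/

section QuadraticChar

variable {F : Type*} [Field F] [Fintype F] [DecidableEq F]

local notation "χ" => quadraticChar F

lemma sum_quadraticChar_mul_quadraticChar_add (hF : ringChar F ≠ 2) {e : F} (he : e ≠ 0) :
    ∑ x : F, χ x * χ (x + e) = -1 := by
  have hJ : jacobiSum χ χ = -χ (-1) := by
    simpa only [(quadraticChar_isQuadratic F).inv] using
      jacobiSum_nontrivial_inv (quadraticChar_ne_one hF)
  -- substituting `x = -e * y` turns the sum into `χ (-1) * jacobiSum χ χ`
  calc ∑ x, χ x * χ (x + e)
      = ∑ y, χ (-e * y) * χ (-e * y + e) :=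
        (Fintype.sum_bijective _ (mulLeft_bijective₀ _ (neg_ne_zero.mpr he)) _ _
          fun _ ↦ rfl).symm
    _ = ∑ y, χ (-1) * (χ e * χ e) * (χ y * χ (1 - y)) := by
        refine Finset.sum_congr rfl fun y _ ↦ ?_
        rw [show -e * y + e = e * (1 - y) by ring, show -e * y = -1 * e * y by ring]
        simp only [map_mul]
        ring
    _ = -1 := by
        rw [← Finset.mul_sum, ← jacobiSum, hJ, ← pow_two, quadraticChar_sq_one he, mul_one,
          mul_neg, ← pow_two, quadraticChar_sq_one (neg_ne_zero.mpr one_ne_zero)]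

lemma one_add_mul_quadraticChar_eq_zero {a : F} (ha : a ≠ 0) {s : ℤˣ} (h : χ a ≠ s) :
    1 + s * χ a = 0 := by
  rcases Int.units_eq_one_or s with rfl | rfl <;>
    rcases quadraticChar_dichotomy ha with h' | h' <;> simp_all

lemma card_sub_mul_eq_of_forall_not (hF : ringChar F ≠ 2) {e : F} (he : e ≠ 0) {s t : ℤˣ}
    (h : ∀ x, ¬ (χ x = s ∧ χ (x + e) = t)) :
    (Fintype.card F : ℤ) - s * t = 2 + t * χ e + s * χ (-e) := by
  -- for `x ∉ {0, -e}`, `f x` is `4` if `χ x = s` and `χ (x + e) = t`, and `0` otherwise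
  set f : F → ℤ := fun x ↦ (1 + s * χ x) * (1 + t * χ (x + e)) with hf
  have hshift : ∑ x, χ (x + e) = 0 := by
    rw [← quadraticChar_sum_zero hF]
    exact Fintype.sum_equiv (Equiv.addRight e) _ _ fun _ ↦ rfl
  have hsum : ∑ x, f x = Fintype.card F - s * t := by
    have hf' : ∀ x, f x = 1 + s * χ x + t * χ (x + e) + s * t * (χ x * χ (x + e)) :=
      fun x ↦ by ring
    simp only [hf', Finset.sum_add_distrib, ← Finset.mul_sum, quadraticChar_sum_zero hF, hshift,
      sum_quadraticChar_mul_quadraticChar_add hF he, Finset.sum_const, Finset.card_univ,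
      nsmul_eq_mul]
    ring
  have hboundary : ∑ x, f x = f 0 + f (-e) := by
    refine Fintype.sum_eq_add _ _ (by simpa using he) fun x ⟨hx0, hx⟩ ↦ ?_
    have hxe : x + e ≠ 0 := fun h' ↦ hx (eq_neg_of_add_eq_zero_left h')
    show (1 + s * χ x) * (1 + t * χ (x + e)) = 0
    by_cases hs : χ x = s
    · rw [one_add_mul_quadraticChar_eq_zero hxe fun ht ↦ h x ⟨hs, ht⟩, mul_zero]
    · rw [one_add_mul_quadraticChar_eq_zero hx0 hs, zero_mul]
  rw [← hsum, hboundary, hf]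
  simp only [zero_add, neg_add_cancel, quadraticChar_zero]
  ring

lemma exists_quadraticChar_eq_and_add_eq (hF : ringChar F ≠ 2) (hcard : 5 < Fintype.card F)
    {e : F} (he : e ≠ 0) (s t : ℤˣ) : ∃ x, χ x = s ∧ χ (x + e) = t := by
  by_contra h
  have hcount := card_sub_mul_eq_of_forall_not hF he (not_exists.mp h)
  have hbound : ∀ (u : ℤˣ) (a : F), (u : ℤ) * χ a ≤ 1 := fun u a ↦ by
    rcases Int.units_eq_one_or u with rfl | rfl <;>
      rcases quadraticChar_isQuadratic F a with h' | h' | h' <;> simp [h']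
  have hst : ((s * t : ℤˣ) : ℤ) ≤ 1 := by
    rcases Int.units_eq_one_or (s * t) with h' | h' <;> simp [h']
  push_cast at hst
  linarith [hbound t e, hbound s (-e)]

end QuadraticChar

open scoped NumberTheorySymbols

/-- `Φ_{-1,-1}(g, d)` is nonempty exactly when `(-1, -1) ∈ jacobiPairs g d`. -/
def jacobiPairs (m d : ℕ) : Set (ℤˣ × ℤˣ) :=
  {v | ∃ x : ℕ, J(x | m) = v.1 ∧ J(x + d | m) = v.2}

section JacobiPairs

variable {m n d p : ℕ}

lemma jacobiSym_add_of_dvd (x : ℤ) (h : m ∣ d) : J(x + d | m) = J(x | m) := by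
  obtain ⟨k, rfl⟩ := h
  exact jacobiSym.mod_left' (by push_cast; exact Int.add_mul_emod_self_left x m k)

lemma mul_mem_jacobiPairs (hmn : m.Coprime n) (hm : m ≠ 0) (hn : n ≠ 0) {v w : ℤˣ × ℤˣ}
    (hv : v ∈ jacobiPairs m d) (hw : w ∈ jacobiPairs n d) :
    v * w ∈ jacobiPairs (m * n) d := by
  obtain ⟨x, hx, hxd⟩ := hv
  obtain ⟨y, hy, hyd⟩ := hw
  obtain ⟨k, hkx, hky⟩ := Nat.chineseRemainder hmn x y
  replace hkx : (k : ℤ) ≡ x [ZMOD m] := Int.natCast_modEq_iff.mpr hkx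
  replace hky : (k : ℤ) ≡ y [ZMOD n] := Int.natCast_modEq_iff.mpr hky
  refine ⟨k, ?_, ?_⟩
  · rw [jacobiSym.mul_right' _ hm hn, jacobiSym.mod_left' hkx, jacobiSym.mod_left' hky, hx,
      hy]
    simp
  · rw [jacobiSym.mul_right' _ hm hn, jacobiSym.mod_left' (hkx.add_right d),
      jacobiSym.mod_left' (hky.add_right d), hxd, hyd]
    simp

lemma one_mem_jacobiPairs_of_dvd (h : m ∣ d) : 1 ∈ jacobiPairs m d :=
  ⟨1, by simp, by simpa using jacobiSym_add_of_dvd 1 h⟩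

lemma mem_jacobiPairs_prime_iff [Fact p.Prime] {v : ℤˣ × ℤˣ} :
    v ∈ jacobiPairs p d ↔
      ∃ x : ZMod p, quadraticChar (ZMod p) x = v.1 ∧ quadraticChar (ZMod p) (x + d) = v.2 := by
  simp only [jacobiPairs, Set.mem_ofPred_eq, ← jacobiSym.legendreSym.to_jacobiSym, legendreSym]
  constructor
  · rintro ⟨x, hx, hxd⟩
    exact ⟨x, by simpa using hx, by simpa using hxd⟩
  · rintro ⟨x, hx, hxd⟩
    exact ⟨x.val, by simpa using hx, by simpa using hxd⟩

lemma jacobiPairs_prime_nonempty (hp : p.Prime) (hp2 : p ≠ 2) : (jacobiPairs p d).Nonempty := by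
  have := Fact.mk hp
  obtain ⟨x, -, hx⟩ := Finset.exists_mem_notMem_of_card_lt_card
    (s := {0, -(d : ZMod p)}) (t := Finset.univ) <| by
      rw [Finset.card_univ, ZMod.card]
      exact Finset.card_le_two.trans_lt (by have := hp.two_le; omega)
  simp only [Finset.mem_insert, Finset.mem_singleton, not_or] at hx
  obtain ⟨u, hu⟩ := Int.isUnit_iff.mpr (quadraticChar_dichotomy hx.1)
  obtain ⟨w, hw⟩ := Int.isUnit_iff.mpr
    (quadraticChar_dichotomy fun h ↦ hx.2 (eq_neg_of_add_eq_zero_left h))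
  exact ⟨(u, w), mem_jacobiPairs_prime_iff.mpr ⟨x, hu.symm, hw.symm⟩⟩

lemma jacobiPairs_nonempty (hm : Odd m) : (jacobiPairs m d).Nonempty := by
  induction m using Nat.recOnPrimeCoprime with
  | zero => simp at hm
  | prime_pow p k hp =>
    rcases k with _ | k
    · exact ⟨1, by simpa using one_mem_jacobiPairs_of_dvd (one_dvd d)⟩
    · obtain ⟨v, x, hx, hxd⟩ := jacobiPairs_prime_nonempty (d := d) hp
        (hm.ne_two_of_dvd_nat (dvd_pow_self p k.succ_ne_zero))
      exact ⟨v ^ (k + 1), x, by simp [jacobiSym.pow_right, hx],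
        by simp [jacobiSym.pow_right, hxd]⟩
  | coprime a b ha hb hab iha ihb =>
    obtain ⟨v, hv⟩ := iha (Nat.Odd.of_mul_left hm)
    obtain ⟨w, hw⟩ := ihb (Nat.Odd.of_mul_right hm)
    exact ⟨v * w, mul_mem_jacobiPairs hab (by omega) (by omega) hv hw⟩

lemma mk_mem_jacobiPairs_of_dvd (hp : p.Prime) (hp2 : p ≠ 2) (hd : p ∣ d) (u : ℤˣ) :
    (u, u) ∈ jacobiPairs p d := by
  have := Fact.mk hp
  have hd0 : (d : ZMod p) = 0 := (ZMod.natCast_eq_zero_iff d p).mpr hd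
  simp only [mem_jacobiPairs_prime_iff, hd0, add_zero, and_self]
  rcases Int.units_eq_one_or u with rfl | rfl
  · exact ⟨1, by simp⟩
  · simpa using quadraticChar_exists_neg_one (by rwa [ZMod.ringChar_zmod_n])

instance fact_prime_five : Fact (Nat.Prime 5) := ⟨by norm_num⟩

lemma quadraticChar_zmod_three_add_ne {a e : ZMod 3} (he : e ≠ 0)
    (ha : quadraticChar (ZMod 3) a ≠ 0) :
    quadraticChar (ZMod 3) (a + e) ≠ quadraticChar (ZMod 3) a := by
  revert a e; decide

lemma exists_forall_quadraticChar_zmod_five {e : ZMod 5} (he : e ≠ 0) :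
    ∃ c : ℤˣ, ∀ v : ℤˣ × ℤˣ, v ≠ (c, c) →
      ∃ x, quadraticChar (ZMod 5) x = v.1 ∧ quadraticChar (ZMod 5) (x + e) = v.2 := by
  revert e; decide

lemma exists_forall_mem_jacobiPairs_of_five_le (hp : p.Prime) (h5 : 5 ≤ p) (hd : ¬ p ∣ d) :
    ∃ c : ℤˣ, ∀ v, (p = 5 → v ≠ (c, c)) → v ∈ jacobiPairs p d := by
  have := Fact.mk hp
  have he : (d : ZMod p) ≠ 0 := by rwa [Ne, ZMod.natCast_eq_zero_iff]
  simp only [mem_jacobiPairs_prime_iff]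
  rcases h5.eq_or_lt with rfl | h7
  · obtain ⟨c, hc⟩ := exists_forall_quadraticChar_zmod_five he
    exact ⟨c, fun v hv ↦ hc v (hv rfl)⟩
  · have hF : ringChar (ZMod p) ≠ 2 := by rw [ZMod.ringChar_zmod_n]; omega
    exact ⟨1, fun v _ ↦ exists_quadraticChar_eq_and_add_eq hF (by rwa [ZMod.card]) he v.1 v.2⟩

lemma fst_ne_snd_of_mem_jacobiPairs_three_mul (hm : m ∣ d) (h3 : ¬ 3 ∣ d) {v : ℤˣ × ℤˣ}
    (hv : v ∈ jacobiPairs (3 * m) d) : v.1 ≠ v.2 := by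
  obtain ⟨x, hx, hxd⟩ := hv
  have hm0 : m ≠ 0 := by rintro rfl; exact h3 (zero_dvd_iff.mp hm ▸ dvd_zero 3)
  intro hv
  rw [jacobiSym.mul_right' _ three_ne_zero hm0] at hx hxd
  rw [jacobiSym_add_of_dvd _ hm, ← hv, ← hx] at hxd
  have hx0 : J(x | 3) * J(x | m) ≠ 0 := hx ▸ v.1.ne_zero
  have hx3 : J(x | 3) ≠ 0 := left_ne_zero_of_mul hx0
  have h3eq : J(x + d | 3) = J(x | 3) := mul_right_cancel₀ (right_ne_zero_of_mul hx0) hxd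
  simp only [← jacobiSym.legendreSym.to_jacobiSym, legendreSym] at hx3 h3eq
  exact quadraticChar_zmod_three_add_ne (by rwa [Ne, ZMod.natCast_eq_zero_iff]) hx3
    (by simpa using h3eq)

lemma exists_mk_neg_mem_jacobiPairs_three (h3 : ¬ 3 ∣ d) :
    ∃ u, (u, -u) ∈ jacobiPairs 3 d := by
  obtain ⟨v, hv⟩ := jacobiPairs_prime_nonempty (d := d) Nat.prime_three (by norm_num)
  have hne := fst_ne_snd_of_mem_jacobiPairs_three_mul (one_dvd d) h3 (by rwa [mul_one])
  exact ⟨v.1, by rwa [← Int.units_ne_iff_eq_neg.mp hne.symm]⟩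

lemma exists_quadraticChar_zmod_five_eq_neg_one_iff (e : ZMod 5) :
    (∃ x, quadraticChar (ZMod 5) x = -1 ∧ quadraticChar (ZMod 5) (x + e) = -1) ↔
      ¬ (e.val = 2 ∨ e.val = 3) := by
  revert e; decide

lemma neg_one_mem_jacobiPairs_five_iff :
    (-1, -1) ∈ jacobiPairs 5 d ↔ ¬ (d % 5 = 2 ∨ d % 5 = 3) := by
  rw [mem_jacobiPairs_prime_iff, ← ZMod.val_natCast 5 d]
  simpa using exists_quadraticChar_zmod_five_eq_neg_one_iff d

lemma exists_forall_mk_mul_mem_jacobiPairs (hp : p.Prime) (hp2 : p ≠ 2)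
    (h : p ∣ d ∨ 5 ≤ p) :
    ∃ ε : ℤˣ, ∀ u, (u, u * ε) ∈ jacobiPairs p d := by
  by_cases hd : p ∣ d
  · exact ⟨1, fun u ↦ by simpa using mk_mem_jacobiPairs_of_dvd hp hp2 hd u⟩
  · obtain ⟨c, hc⟩ := exists_forall_mem_jacobiPairs_of_five_le hp (h.resolve_left hd) hd
    refine ⟨-1, fun u ↦ hc _ fun _ huc ↦ ?_⟩
    simp only [mul_neg, mul_one, Prod.mk.injEq] at huc
    exact units_ne_neg_self u (huc.1.trans huc.2.symm)

lemma eq_three_of_forall_prime_dvd (hm : 1 < m) (hodd : Odd m) (hsf : Squarefree m)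
    (h : ∀ q, q.Prime → q ∣ m → q < 5) : m = 3 := by
  have hfac : m.primeFactors = {3} := by
    refine (Nat.nonempty_primeFactors.mpr hm).subset_singleton_iff.mp fun q hq ↦ ?_
    obtain ⟨hq, hqm, -⟩ := Nat.mem_primeFactors.mp hq
    rw [Finset.mem_singleton]
    by_contra h3
    exact (h q hq hqm).not_ge (hq.five_le_of_ne_two_of_ne_three (hodd.ne_two_of_dvd_nat hqm) h3)
  rw [← Nat.prod_primeFactors_of_squarefree hsf, hfac, Finset.prod_singleton]

lemma exists_mem_jacobiPairs_ne_mk_self (hm : 1 < m) (hodd : Odd m) (hsf : Squarefree m)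
    (c : ℤˣ) : ∃ v ∈ jacobiPairs m d, v ≠ (c, c) := by
  by_cases h : ∃ q, q.Prime ∧ q ∣ m ∧ (q ∣ d ∨ 5 ≤ q)
  · obtain ⟨q, hq, ⟨n, rfl⟩, hqd⟩ := h
    obtain ⟨ε, hε⟩ :=
      exists_forall_mk_mul_mem_jacobiPairs hq (hodd.ne_two_of_dvd_nat (dvd_mul_right q n)) hqd
    obtain ⟨w, hw⟩ := jacobiPairs_nonempty (d := d) (Nat.Odd.of_mul_right hodd)
    refine ⟨_, mul_mem_jacobiPairs (Nat.coprime_of_squarefree_mul hsf) hq.ne_zero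
      (right_ne_zero_of_mul hsf.ne_zero) (hε (-c * w.1⁻¹)) hw, fun hwc ↦ ?_⟩
    have := congrArg Prod.fst hwc
    simp only [Prod.fst_mul, inv_mul_cancel_right] at this
    exact units_ne_neg_self c this.symm
  · push Not at h
    have h3 : m = 3 := eq_three_of_forall_prime_dvd hm hodd hsf fun q hq hqm ↦ (h q hq hqm).2
    obtain ⟨u, hu⟩ := exists_mk_neg_mem_jacobiPairs_three (d := d)
      (h 3 Nat.prime_three (h3 ▸ dvd_rfl)).1
    refine ⟨_, h3 ▸ hu, fun huc ↦ ?_⟩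
    simp only [Prod.mk.injEq] at huc
    exact units_ne_neg_self u (huc.1.trans huc.2.symm)

lemma exists_prime_dvd_not_dvd (hsf : Squarefree m) {n : ℕ} (h : ¬ m ∣ n) :
    ∃ p, p.Prime ∧ p ∣ m ∧ ¬ p ∣ n := by
  have hn : n ≠ 0 := by rintro rfl; exact h (dvd_zero m)
  rw [← Nat.prod_primeFactors_of_squarefree hsf, Nat.prod_primeFactors_dvd_iff hn,
    Finset.not_subset] at h
  obtain ⟨p, hp, hpn⟩ := h
  obtain ⟨hp, hpm, -⟩ := Nat.mem_primeFactors.mp hp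
  exact ⟨p, hp, hpm, fun h ↦ hpn (Nat.mem_primeFactors.mpr ⟨hp, h, hn⟩)⟩

lemma neg_one_mem_jacobiPairs (hm : 1 < m) (hodd : Odd m) (hsf : Squarefree m)
    (h5 : ¬ (m = 5 ∧ (d % 5 = 2 ∨ d % 5 = 3))) (hmd : m ∣ d ∨ ¬ m ∣ 3 * d) :
    (-1, -1) ∈ jacobiPairs m d := by
  rcases hmd with hmd | hmd
  · obtain ⟨p, hp, n, rfl⟩ := Nat.exists_prime_and_dvd hm.ne'
    simpa using mul_mem_jacobiPairs (Nat.coprime_of_squarefree_mul hsf) hp.ne_zero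
      (right_ne_zero_of_mul hsf.ne_zero)
      (mk_mem_jacobiPairs_of_dvd hp (hodd.ne_two_of_dvd_nat (dvd_mul_right p n))
        (dvd_of_mul_right_dvd hmd) (-1))
      (one_mem_jacobiPairs_of_dvd (dvd_of_mul_left_dvd hmd))
  · obtain ⟨p, hp, ⟨n, rfl⟩, hp3d⟩ := exists_prime_dvd_not_dvd hsf hmd
    have hpd : ¬ p ∣ d := fun h ↦ hp3d (h.mul_left 3)
    have hp5 : 5 ≤ p := hp.five_le_of_ne_two_of_ne_three
      (hodd.ne_two_of_dvd_nat (dvd_mul_right p n))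
      (by rintro rfl; exact hp3d (dvd_mul_right 3 d))
    obtain ⟨c, hc⟩ := exists_forall_mem_jacobiPairs_of_five_le hp hp5 hpd
    rcases eq_or_ne n 1 with rfl | hn
    · rw [mul_one] at h5 ⊢
      rcases eq_or_ne p 5 with rfl | hp5
      · exact neg_one_mem_jacobiPairs_five_iff.mpr fun h ↦ h5 ⟨rfl, h⟩
      · exact hc _ fun h ↦ absurd h hp5
    · obtain ⟨⟨s, t⟩, hv, hvc⟩ := exists_mem_jacobiPairs_ne_mk_self (d := d)
        (by have := right_ne_zero_of_mul hsf.ne_zero; omega) (Nat.Odd.of_mul_right hodd)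
        hsf.of_mul_right (-c)
      have hv' : (-s, -t) ∈ jacobiPairs p d :=
        hc _ fun _ h ↦ hvc (by simp only [Prod.mk.injEq, neg_eq_iff_eq_neg] at h ⊢; exact h)
      simpa [Int.units_mul_self] using mul_mem_jacobiPairs (Nat.coprime_of_squarefree_mul hsf)
        hp.ne_zero (right_ne_zero_of_mul hsf.ne_zero) hv' hv

lemma neg_one_notMem_jacobiPairs (hsf : Squarefree m)
    (h : m = 1 ∨ (m = 5 ∧ (d % 5 = 2 ∨ d % 5 = 3)) ∨ (¬ m ∣ d ∧ m ∣ 3 * d)) :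
    (-1, -1) ∉ jacobiPairs m d := by
  rcases h with rfl | ⟨rfl, h5⟩ | ⟨hmd, hm3d⟩
  · rintro ⟨x, hx, -⟩
    simp [jacobiSym.one_right] at hx
  · exact fun h ↦ neg_one_mem_jacobiPairs_five_iff.mp h h5
  · have h3m : 3 ∣ m := by
      by_contra h3m
      exact hmd ((Nat.prime_three.coprime_iff_not_dvd.mpr h3m).symm.dvd_of_dvd_mul_left hm3d)
    obtain ⟨n, rfl⟩ := h3m
    have hnd : n ∣ d := Nat.dvd_of_mul_dvd_mul_left three_pos hm3d
    have h3d : ¬ 3 ∣ d := fun h ↦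
      hmd ((Nat.coprime_of_squarefree_mul hsf).mul_dvd_of_dvd_of_dvd h hnd)
    exact fun h ↦ fst_ne_snd_of_mem_jacobiPairs_three_mul hnd h3d h rfl

end JacobiPairs

lemma card_filter_jacobiSym_eq_zero_iff {g d : ℕ} (hg : g ≠ 0) :
    ((Finset.Icc 1 g).filter fun α : ℕ ↦ J(α | g) = -1 ∧ J(α + d | g) = -1).card = 0 ↔
      (-1, -1) ∉ jacobiPairs g d := by
  rw [Finset.card_eq_zero, Finset.filter_eq_empty_iff]
  constructor
  · rintro h ⟨x, hx, hxd⟩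
    have hx' : ((x % g : ℕ) : ℤ) ≡ x [ZMOD g] := by
      rw [Int.natCast_mod]
      exact Int.mod_modEq _ _
    have hx0 : x % g ≠ 0 := fun h0 ↦ by
      have := jacobiSym.mod_left' hx'
      rcases (Nat.one_le_iff_ne_zero.mpr hg).eq_or_lt with rfl | hg1
      · simp at hx
      · rw [h0, Nat.cast_zero, jacobiSym.zero_left hg1, hx] at this
        simp at this
    refine h (x := x % g) (Finset.mem_Icc.mpr ⟨Nat.one_le_iff_ne_zero.mpr hx0,
      (Nat.mod_lt x (Nat.pos_of_ne_zero hg)).le⟩) ⟨?_, ?_⟩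
    · rw [jacobiSym.mod_left' hx', hx]; rfl
    · rw [jacobiSym.mod_left' (hx'.add_right d), hxd]; rfl
  · rintro h α - ⟨hα, hαd⟩
    exact h ⟨α, by simpa using hα, by simpa using hαd⟩

theorem stmt_9_general (g d : ℕ) (hgodd : Odd g) (hgsf : Squarefree g) :
    (((Finset.Icc 1 g).filter
        (fun α : ℕ => jacobiSym (α : ℤ) g = -1 ∧ jacobiSym ((α : ℤ) + d) g = -1)).card = 0
      ↔ (g = 1 ∨ (g = 5 ∧ (d % 5 = 2 ∨ d % 5 = 3)) ∨ (¬ g ∣ d ∧ g ∣ 3 * d))) := by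
  rw [card_filter_jacobiSym_eq_zero_iff hgsf.ne_zero]
  refine ⟨fun h ↦ by_contra fun hc ↦ h ?_, neg_one_notMem_jacobiPairs hgsf⟩
  obtain ⟨hg1, h5, h3⟩ := not_or.mp hc |>.imp_right not_or.mp
  exact neg_one_mem_jacobiPairs (by have := hgodd.pos; omega) hgodd hgsf h5 (by tauto)

theorem stmt_9 (g d : ℕ) (hg : 0 < g) (hgodd : Odd g) (hgsf : Squarefree g)
    (hd : 0 < d) (hde : Even d) :
    (((Finset.Icc 1 g).filter
        (fun α : ℕ => jacobiSym (α : ℤ) g = -1 ∧ jacobiSym ((α : ℤ) + d) g = -1)).card = 0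
      ↔ (g = 1 ∨ (g = 5 ∧ (d % 5 = 2 ∨ d % 5 = 3)) ∨ (¬ g ∣ d ∧ g ∣ 3 * d))) :=
  stmt_9_general g d hgodd hgsf
end

section
/- For a prime p and integer g with p ∤ g, the indicator function of g being a primitive root mod p satisfies: f(g) = (φ(p-1)/(p-1))·Σ_{k | p-1} (μ(k)/φ(k))·Σ_{χ of order k} χ(g), where the inner sum runs over Dirichlet characters mod p of order exactly k. -/
/-!
Write `n = p - 1` and `u` for the class of `g`. The character group is cyclic of order `n`, and
the characters with `χ ^ d = 1` form the annihilator of the `d`-th powers, so by duality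
`∑_{χ ^ d = 1} χ u` is `d` when `u` is a `d`-th power, i.e. when `ord u ∣ n / d`, and `0`
otherwise. Euler's product gives `(φ n / n) · μ k / φ k = ∑_{k ∣ d ∣ n} μ d / d`; exchanging the
sums, the right-hand side becomes `∑_{d ∣ n} (μ d / d) ∑_{χ ^ d = 1} χ u = ∑_{d ∣ n / ord u} μ d`,
which is `1` exactly when `ord u = n`.
-/

open ArithmeticFunction Finset
open scoped ArithmeticFunction.Moebius Nat

namespace Nat

theorem squarefree_prod_primeFactors (n : ℕ) : Squarefree (∏ p ∈ n.primeFactors, p) :=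
  Finset.squarefree_prod_of_pairwise_isCoprime
    (fun _ hp _ hq hpq => coprime_iff_isRelPrime.mp <|
      (coprime_primes (prime_of_mem_primeFactors hp) (prime_of_mem_primeFactors hq)).mpr hpq)
    fun _ hp => (prime_of_mem_primeFactors hp).prime.squarefree

theorem sum_divisors_eq_sum_divisors_prod_primeFactors {M : Type*} [AddCommMonoid M]
    {f : ℕ → M} (hf : ∀ d, ¬ Squarefree d → f d = 0) {n : ℕ} (hn : n ≠ 0) :
    ∑ d ∈ n.divisors, f d = ∑ d ∈ (∏ p ∈ n.primeFactors, p).divisors, f d := by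
  have hsq : ∀ m : ℕ, ∀ d ∈ m.divisors, f d ≠ 0 → Squarefree d :=
    fun _ d _ hd => not_not.mp (mt (hf d) hd)
  rw [← sum_filter_of_ne (hsq n), ← sum_filter_of_ne (hsq _), sum_divisors_filter_squarefree hn,
    sum_divisors_filter_squarefree (squarefree_prod_primeFactors n).ne_zero]
  simp only [factors_eq, List.toFinset_coe, toFinset_factors, primeFactors_prod_primeFactors]

theorem cast_totient_div_self {K : Type*} [Field K] [CharZero K] {n : ℕ} (hn : n ≠ 0) :
    (φ n : K) / n = ∏ q ∈ n.primeFactors, (1 - (q : K)⁻¹) := by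
  have h := congrArg (Rat.cast : ℚ → K) (totient_eq_mul_prod_factors n)
  push_cast at h
  rw [h, mul_div_cancel_left₀ _ (cast_ne_zero.mpr hn)]

theorem sum_divisors_sum_filter_dvd_mul {R : Type*} [NonUnitalNonAssocSemiring R]
    (F G : ℕ → R) {n : ℕ} (hn : n ≠ 0) :
    ∑ k ∈ n.divisors, (∑ d ∈ n.divisors with k ∣ d, F d) * G k
      = ∑ d ∈ n.divisors, F d * ∑ k ∈ d.divisors, G k := by
  simp_rw [sum_mul, sum_filter]
  rw [sum_comm]
  refine sum_congr rfl fun d hd => ?_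
  rw [← sum_filter, divisors_filter_dvd_of_dvd hn (dvd_of_mem_divisors hd), mul_sum]

theorem sum_divisors_moebius_filter_dvd_div {R : Type*} [Ring R] {n m : ℕ} (hn : n ≠ 0)
    (hm : m ∣ n) :
    ∑ d ∈ n.divisors with m ∣ n / d, (μ d : R) = if m = n then 1 else 0 := by
  have hm0 : m ≠ 0 := ne_zero_of_dvd_ne_zero hn hm
  have hfilter : {d ∈ n.divisors | m ∣ n / d} = (n / m).divisors := by
    rw [← divisors_filter_dvd_of_dvd hn (div_dvd_of_dvd hm)]
    refine filter_congr fun d hd => ?_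
    rw [Nat.dvd_div_iff_mul_dvd (dvd_of_mem_divisors hd), Nat.dvd_div_iff_mul_dvd hm, mul_comm]
  have hmoebius : ∑ d ∈ (n / m).divisors, (μ d : ℤ) = if n / m = 1 then 1 else 0 := by
    rw [← coe_mul_zeta_apply, moebius_mul_coe_zeta, one_apply]
  have hdiv : n / m = 1 ↔ m = n := by
    rw [Nat.div_eq_iff_eq_mul_left (pos_of_ne_zero hm0) hm, one_mul, eq_comm]
  rw [hfilter, ← Int.cast_sum, hmoebius]
  simp [hdiv]

end Nat

namespace ArithmeticFunction

theorem IsMultiplicative.sum_divisors_moebius_mul {R : Type*} [CommRing R]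
    {f : ArithmeticFunction R} (hf : f.IsMultiplicative) {n : ℕ} (hn : n ≠ 0) :
    ∑ d ∈ n.divisors, (μ d : R) * f d = ∏ p ∈ n.primeFactors, (1 - f p) := by
  rw [Nat.sum_divisors_eq_sum_divisors_prod_primeFactors
      (fun d hd => by simp [moebius_eq_zero_of_not_squarefree hd]) hn,
    ← hf.prodPrimeFactors_one_sub_of_squarefree f (Nat.squarefree_prod_primeFactors n),
    Nat.primeFactors_prod_primeFactors]

variable (K : Type*) [Field K]

def coprimeInv (k : ℕ) : ArithmeticFunction K :=
  ⟨fun e => if e.Coprime k then (e : K)⁻¹ else 0, by simp⟩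

theorem coprimeInv_apply (k e : ℕ) :
    coprimeInv K k e = if e.Coprime k then (e : K)⁻¹ else 0 := rfl

theorem isMultiplicative_coprimeInv (k : ℕ) : (coprimeInv K k).IsMultiplicative := by
  refine IsMultiplicative.iff_ne_zero.mpr ⟨by simp [coprimeInv_apply], fun _ _ _ => ?_⟩
  simp only [coprimeInv_apply, Nat.coprime_mul_iff_left, ite_zero_mul_ite_zero, Nat.cast_mul,
    mul_inv, ite_and]

variable {K}

theorem moebius_mul_div_mul_eq_mul_coprimeInv (k e : ℕ) :
    (μ (k * e) : K) / (k * e) = μ k / k * (μ e * coprimeInv K k e) := by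
  by_cases hc : e.Coprime k
  · rw [isMultiplicative_moebius.map_mul_of_coprime hc.symm, coprimeInv_apply, if_pos hc]
    push_cast
    ring
  · have : ¬ Squarefree (k * e) := fun h => hc (Nat.squarefree_mul_iff.mp h).1.symm
    rw [moebius_eq_zero_of_not_squarefree this, coprimeInv_apply, if_neg hc]
    simp

theorem prod_primeFactors_one_sub_inv_of_dvd {n k : ℕ} (hn : n ≠ 0) (hk : k ∣ n) :
    ∏ q ∈ n.primeFactors, (1 - (q : K)⁻¹)
      = (∏ q ∈ k.primeFactors, (1 - (q : K)⁻¹)) *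
          ∏ q ∈ (n / k).primeFactors, (1 - coprimeInv K k q) := by
  have hk0 : k ≠ 0 := ne_zero_of_dvd_ne_zero hn hk
  have hnk : n / k ≠ 0 := (Nat.div_ne_zero_iff_of_dvd hk).mpr ⟨hn, hk0⟩
  have hcop : ∀ q ∈ (n / k).primeFactors, q.Coprime k ↔ q ∉ k.primeFactors := fun q hq => by
    rw [(Nat.prime_of_mem_primeFactors hq).coprime_iff_not_dvd,
      Nat.mem_primeFactors_of_ne_zero hk0, and_iff_right (Nat.prime_of_mem_primeFactors hq)]
  have hsplit : ∏ q ∈ (n / k).primeFactors, (1 - coprimeInv K k q)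
      = ∏ q ∈ (n / k).primeFactors \ k.primeFactors, (1 - (q : K)⁻¹) := by
    rw [← prod_subset sdiff_subset fun q hq hq' => ?_]
    · refine prod_congr rfl fun q hq => ?_
      rw [mem_sdiff] at hq
      rw [coprimeInv_apply, if_pos ((hcop q hq.1).mpr hq.2)]
    · have hqk : q ∈ k.primeFactors := by simpa [hq] using hq'
      rw [coprimeInv_apply, if_neg fun h => (hcop q hq).mp h hqk, sub_zero]
  rw [hsplit, ← Nat.mul_div_cancel' hk, Nat.primeFactors_mul hk0 hnk, Nat.mul_div_cancel' hk,
    ← prod_sdiff (s₁ := k.primeFactors) subset_union_left, union_sdiff_left, mul_comm]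

theorem sum_divisors_filter_dvd_moebius_div {n k : ℕ} (hn : n ≠ 0) (hk : k ∣ n) :
    ∑ d ∈ n.divisors with k ∣ d, (μ d : K) / d
      = μ k / k * ∏ q ∈ (n / k).primeFactors, (1 - coprimeInv K k q) := by
  have hk0 : k ≠ 0 := ne_zero_of_dvd_ne_zero hn hk
  have hnk : n / k ≠ 0 := (Nat.div_ne_zero_iff_of_dvd hk).mpr ⟨hn, hk0⟩
  have himage : {d ∈ n.divisors | k ∣ d} = (n / k).divisors.image (k * ·) := by
    ext d
    simp only [mem_filter, Nat.mem_divisors, mem_image]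
    constructor
    · rintro ⟨⟨hdn, -⟩, e, rfl⟩
      exact ⟨e, ⟨(Nat.dvd_div_iff_mul_dvd hk).mpr hdn, hnk⟩, rfl⟩
    · rintro ⟨e, ⟨he, -⟩, rfl⟩
      exact ⟨⟨(Nat.dvd_div_iff_mul_dvd hk).mp he, hn⟩, dvd_mul_right k e⟩
  rw [himage, sum_image fun _ _ _ _ h => Nat.eq_of_mul_eq_mul_left (Nat.pos_of_ne_zero hk0) h]
  simp_rw [Nat.cast_mul, moebius_mul_div_mul_eq_mul_coprimeInv, ← mul_sum]
  rw [(isMultiplicative_coprimeInv K k).sum_divisors_moebius_mul hnk]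

theorem totient_div_mul_moebius_div_totient [CharZero K] {n k : ℕ} (hn : n ≠ 0) (hk : k ∣ n) :
    (φ n : K) / n * (μ k / φ k) = ∑ d ∈ n.divisors with k ∣ d, (μ d : K) / d := by
  have hk0 : k ≠ 0 := ne_zero_of_dvd_ne_zero hn hk
  have hφk : (φ k : K) ≠ 0 :=
    Nat.cast_ne_zero.mpr (Nat.totient_pos.mpr (Nat.pos_of_ne_zero hk0)).ne'
  have hkK : (k : K) ≠ 0 := Nat.cast_ne_zero.mpr hk0
  have hφ : (φ n : K) / n = φ k / k * ∏ q ∈ (n / k).primeFactors, (1 - coprimeInv K k q) := by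
    rw [Nat.cast_totient_div_self hn, Nat.cast_totient_div_self hk0,
      prod_primeFactors_one_sub_inv_of_dvd hn hk]
  rw [sum_divisors_filter_dvd_moebius_div hn hk, hφ]
  field_simp

end ArithmeticFunction

theorem sum_sum_orderOf_eq_sum_pow_eq_one {G M : Type*} [Monoid G] [Fintype G] [DecidableEq G]
    [AddCommMonoid M] (f : G → M) {d : ℕ} (hd : d ≠ 0) :
    ∑ k ∈ d.divisors, ∑ x ∈ univ.filter (fun x : G => orderOf x = k), f x
      = ∑ x ∈ univ.filter (fun x : G => x ^ d = 1), f x := by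
  rw [← sum_fiberwise_of_maps_to (g := orderOf) fun x hx => Nat.mem_divisors.mpr
    ⟨orderOf_dvd_of_pow_eq_one (mem_filter.mp hx).2, hd⟩]
  refine sum_congr rfl fun k hk => sum_congr ?_ fun _ _ => rfl
  ext x
  simp only [mem_filter, mem_univ, true_and, iff_and_self]
  rintro rfl
  exact orderOf_dvd_iff_pow_eq_one.mp (Nat.dvd_of_mem_divisors hk)

theorem IsCyclic.mem_range_powMonoidHom_iff {G : Type*} [CommGroup G] [IsCyclic G] [Finite G]
    {d : ℕ} (hd : d ∣ Nat.card G) (x : G) :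
    x ∈ (powMonoidHom d : G →* G).range ↔ x ^ (Nat.card G / d) = 1 := by
  have hle : (powMonoidHom d : G →* G).range ≤ (powMonoidHom (Nat.card G / d)).ker := by
    rintro _ ⟨y, rfl⟩
    simp [← pow_mul, Nat.mul_div_cancel' hd, pow_card_eq_one']
  have heq := Subgroup.eq_of_le_of_card_ge hle (by
    rw [card_powMonoidHom_range, card_powMonoidHom_ker, Nat.gcd_eq_right hd,
      Nat.gcd_eq_right (Nat.div_dvd_of_dvd hd)])
  rw [heq, MonoidHom.mem_ker, powMonoidHom_apply]

namespace MulChar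

variable {M R : Type*} [CommMonoid M] [Finite M] [CommRing R] [IsDomain R]
  [HasEnoughRootsOfUnity R (Monoid.exponent Mˣ)] [Fintype (MulChar M R)] [IsCyclic Mˣ]

theorem sum_filter_pow_eq_one_apply [DecidableEq (MulChar M R)] {d : ℕ} (hd : d ∣ Nat.card Mˣ)
    (u : Mˣ) :
    ∑ χ ∈ univ.filter (fun χ : MulChar M R => χ ^ d = 1), χ u
      = if orderOf u ∣ Nat.card Mˣ / d then (d : R) else 0 := by
  classical
  set H := (powMonoidHom d : Mˣ →* Mˣ).range
  set X := (subgroupOrderIsoSubgroupMulChar M R H).ofDual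
  have hX (χ : MulChar M R) : χ ∈ X ↔ χ ^ d = 1 := by
    simp [X, H, mem_subgroupOrderIsoSubgroupMulChar_iff, MulChar.ext_iff, MulChar.pow_apply_coe]
  have hu : u ∈ H ↔ ∀ χ ∈ X, χ u = 1 := by
    rw [← mem_subgroupOrderIsoSubgroupMulChar_symm_iff, OrderDual.toDual_ofDual,
      OrderIso.symm_apply_apply]
  have hcard : Nat.card X = d := by
    rw [card_subgroupOrderIsoSubgroupMulChar, ← Subgroup.index_eq_card,
      IsCyclic.index_powMonoidHom_range, Nat.gcd_eq_right hd]
  let eval : X →* R :=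
    { toFun := fun χ => (χ : MulChar M R) u
      map_one' := by simp
      map_mul' := fun χ ψ => by simp }
  have heval : eval = 1 ↔ orderOf u ∣ Nat.card Mˣ / d := by
    rw [orderOf_dvd_iff_pow_eq_one, ← IsCyclic.mem_range_powMonoidHom_iff hd, hu,
      MonoidHom.ext_iff, Subtype.forall]
    rfl
  rw [sum_subtype (p := (· ∈ X)) _ (fun χ => by simp [hX])]
  refine (sum_hom_units eval).trans ?_
  rw [← Nat.card_eq_fintype_card, hcard]
  simp only [heval, apply_ite (Nat.cast : ℕ → R), Nat.cast_zero]

theorem ite_orderOf_eq_card_eq_sum_moebius {K : Type*} [Field K] [CharZero K]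
    [HasEnoughRootsOfUnity K (Monoid.exponent Mˣ)] [Fintype (MulChar M K)] (u : Mˣ) :
    (if orderOf u = Nat.card Mˣ then (1 : K) else 0)
      = (φ (Nat.card Mˣ) : K) / Nat.card Mˣ *
          ∑ k ∈ (Nat.card Mˣ).divisors, (μ k : K) / φ k *
            ∑ χ ∈ univ.filter (fun χ : MulChar M K => orderOf χ = k), χ u := by
  classical
  set n := Nat.card Mˣ
  have hn : n ≠ 0 := Nat.card_pos.ne'
  set T : ℕ → K := fun k => ∑ χ ∈ univ.filter (fun χ : MulChar M K => orderOf χ = k), χ u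
  calc (if orderOf u = n then (1 : K) else 0)
      = ∑ d ∈ n.divisors with orderOf u ∣ n / d, (μ d : K) :=
        (Nat.sum_divisors_moebius_filter_dvd_div hn (orderOf_dvd_natCard u)).symm
    _ = ∑ d ∈ n.divisors, (μ d : K) / d * (if orderOf u ∣ n / d then (d : K) else 0) := by
        rw [sum_filter]
        refine sum_congr rfl fun d hd => ?_
        have hd0 : (d : K) ≠ 0 := Nat.cast_ne_zero.mpr (Nat.pos_of_mem_divisors hd).ne'
        split_ifs <;> simp [hd0]
    _ = ∑ d ∈ n.divisors, (μ d : K) / d * ∑ k ∈ d.divisors, T k := by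
        refine sum_congr rfl fun d hd => ?_
        rw [sum_sum_orderOf_eq_sum_pow_eq_one _ (Nat.pos_of_mem_divisors hd).ne']
        exact congrArg _ (sum_filter_pow_eq_one_apply (Nat.dvd_of_mem_divisors hd) u).symm
    _ = ∑ k ∈ n.divisors, (∑ d ∈ n.divisors with k ∣ d, (μ d : K) / d) * T k :=
        (Nat.sum_divisors_sum_filter_dvd_mul _ _ hn).symm
    _ = (φ n : K) / n * ∑ k ∈ n.divisors, (μ k : K) / φ k * T k := by
        rw [mul_sum]
        refine sum_congr rfl fun k hk => ?_
        rw [← mul_assoc, totient_div_mul_moebius_div_totient hn (Nat.dvd_of_mem_divisors hk)]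

end MulChar

open ArithmeticFunction in
theorem stmt_14 (p : ℕ) [Fact p.Prime] (g : ℤ) (hpg : ¬ (p : ℤ) ∣ g) :
    (if orderOf ((g : ZMod p)) = p - 1 then (1 : ℂ) else 0)
      = ((Nat.totient (p - 1) : ℂ) / ((p : ℂ) - 1)) *
          ∑ k ∈ (p - 1).divisors,
            ((moebius k : ℂ) / (Nat.totient k : ℂ)) *
              ∑ χ ∈ Finset.univ.filter
                  (fun χ : DirichletCharacter ℂ p => orderOf χ = k),
                χ ((g : ZMod p)) := by
  have hg : IsUnit (g : ZMod p) :=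
    isUnit_iff_ne_zero.mpr fun h => hpg ((ZMod.intCast_zmod_eq_zero_iff_dvd g p).mp h)
  have hcard : Nat.card (ZMod p)ˣ = p - 1 := by
    rw [Nat.card_eq_fintype_card, ZMod.card_units_eq_totient, Nat.totient_prime Fact.out]
  have hp1 : (p : ℂ) - 1 = ((p - 1 : ℕ) : ℂ) := by
    rw [Nat.cast_sub (Fact.out : p.Prime).one_le, Nat.cast_one]
  rw [← hg.unit_spec, orderOf_units, hp1, ← hcard]
  exact MulChar.ite_orderOf_eq_card_eq_sum_moebius hg.unit
end

section
/- Let p be an odd prime, g an integer with p ∤ g, and k an odd positive integer dividing p-1 with 2k | p-1. Define φ̃_g(k,p) := φ(gcd(k, I))·μ(gcd(k, I)) where I = [(ℤ/pℤ)^× : ⟨g⟩] is the index of the subgroup generated by g. Then φ̃_g(2k, p) = -(g/p)·φ̃_g(k,p), where (g/p) is the Legendre symbol. -/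
/-! By Euler's criterion, `g` is a square mod `p` exactly when `g ^ ((p - 1) / 2) = 1`, i.e. when
the index `I = (p - 1) / ord g` is even. If `I` is even then, `k` being odd,
`gcd (2k, I) = 2 gcd (k, I)` with `gcd (k, I)` odd, and `φ(2d) μ(2d) = -φ(d) μ(d)` for odd `d`;
if `I` is odd then `gcd (2k, I) = gcd (k, I)` and the Legendre symbol is `-1`. -/

open ArithmeticFunction

theorem pow_div_eq_one_iff_dvd_div_orderOf {G : Type*} [Monoid G] {x : G} {m n : ℕ}
    (hm : m ∣ n) (hx : orderOf x ∣ n) : x ^ (n / m) = 1 ↔ m ∣ n / orderOf x := by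
  rw [← orderOf_dvd_iff_pow_eq_one, Nat.dvd_div_iff_mul_dvd hm, Nat.dvd_div_iff_mul_dvd hx,
    mul_comm]

theorem legendreSym_eq_one_iff_even_index (p : ℕ) [Fact p.Prime] (hp : p ≠ 2) {g : ℤ}
    (hg : (g : ZMod p) ≠ 0) : legendreSym p g = 1 ↔ Even ((p - 1) / orderOf (g : ZMod p)) := by
  obtain ⟨m, hm⟩ := (Fact.out : p.Prime).odd_of_ne_two hp
  rw [legendreSym.eq_one_iff p hg, ZMod.euler_criterion p hg, even_iff_two_dvd,
    show p / 2 = (p - 1) / 2 by omega]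
  exact pow_div_eq_one_iff_dvd_div_orderOf (by omega) (ZMod.orderOf_dvd_card_sub_one hg)

theorem Nat.gcd_two_mul_of_even {k n : ℕ} (hk : Odd k) (hn : Even n) :
    Nat.gcd (2 * k) n = 2 * Nat.gcd k n := by
  obtain ⟨m, rfl⟩ := hn.two_dvd
  rw [Nat.gcd_mul_left, Nat.Coprime.gcd_mul_left_cancel_right m (Nat.coprime_two_left.mpr hk)]

theorem Nat.gcd_two_mul_of_odd (k : ℕ) {n : ℕ} (hn : Odd n) :
    Nat.gcd (2 * k) n = Nat.gcd k n :=
  Nat.Coprime.gcd_mul_left_cancel k (Nat.coprime_two_left.mpr hn)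

theorem totient_mul_moebius_two_mul {d : ℕ} (hd : Odd d) :
    (Nat.totient (2 * d) : ℤ) * moebius (2 * d) = -((Nat.totient d : ℤ) * moebius d) := by
  have h2d : Nat.Coprime 2 d := Nat.coprime_two_left.mpr hd
  rw [Nat.totient_mul h2d, Nat.totient_two, isMultiplicative_moebius.map_mul_of_coprime h2d,
    moebius_apply_prime Nat.prime_two]
  push_cast
  ring

theorem stmt_15_general (p : ℕ) [Fact p.Prime] (hpodd : p ≠ 2)
    (g : ℤ) (hpg : ¬ (p : ℤ) ∣ g) (k : ℕ) (hk : Odd k) :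
    (Nat.totient (Nat.gcd (2 * k) ((p - 1) / orderOf ((g : ZMod p)))) : ℤ) *
        moebius (Nat.gcd (2 * k) ((p - 1) / orderOf ((g : ZMod p))))
      = - legendreSym p g *
          ((Nat.totient (Nat.gcd k ((p - 1) / orderOf ((g : ZMod p)))) : ℤ) *
            moebius (Nat.gcd k ((p - 1) / orderOf ((g : ZMod p))))) := by
  have hg : (g : ZMod p) ≠ 0 := by rwa [Ne, ZMod.intCast_zmod_eq_zero_iff_dvd]
  set I := (p - 1) / orderOf (g : ZMod p)
  rcases Nat.even_or_odd I with hI | hI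
  · rw [(legendreSym_eq_one_iff_even_index p hpodd hg).mpr hI, Nat.gcd_two_mul_of_even hk hI,
      totient_mul_moebius_two_mul (hk.of_dvd_nat (Nat.gcd_dvd_left k I)), neg_one_mul]
  · have hL : legendreSym p g = -1 :=
      (legendreSym.eq_one_or_neg_one p hg).resolve_left
        fun h ↦ Nat.not_even_iff_odd.mpr hI ((legendreSym_eq_one_iff_even_index p hpodd hg).mp h)
    rw [hL, Nat.gcd_two_mul_of_odd k hI, neg_neg, one_mul]

open ArithmeticFunction in
theorem stmt_15 (p : ℕ) [Fact p.Prime] (hpodd : p ≠ 2)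
    (g : ℤ) (hpg : ¬ (p : ℤ) ∣ g) (k : ℕ) (hk : Odd k) (h2k : 2 * k ∣ p - 1) :
    (Nat.totient (Nat.gcd (2 * k) ((p - 1) / orderOf ((g : ZMod p)))) : ℤ) *
        moebius (Nat.gcd (2 * k) ((p - 1) / orderOf ((g : ZMod p))))
      = - legendreSym p g *
          ((Nat.totient (Nat.gcd k ((p - 1) / orderOf ((g : ZMod p)))) : ℤ) *
            moebius (Nat.gcd k ((p - 1) / orderOf ((g : ZMod p))))) :=
  stmt_15_general p hpodd g hpg k hk
end

section
/- For odd squarefree g̃ coprime to even d, and ε₁, ε₂ ∈ {±1}: Σ_{a ∈ Φ_{ε₁,ε₂}(g̃,d)} ∏_{p | gcd(a-1, g̃)} (1 - 1/p) · ∏_{p | gcd(a+d-1, g̃)} (1 - 1/p) = (1/4)·[∏_{q|g̃} c(q) + ε₁·∏_{q|g̃} c₁(q) + ε₂·∏_{q|g̃} c₂(q) + ε₁ε₂·∏_{q|g̃} c₁₂(q)], where for each prime q | g̃: c(q) = q - 2 - 2/q if q ∤ d±1 and q - 2 - 1/q if q | d±1; c₁(q) = -((-d)/q) - (1/q)(1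 + ((1-d)/q)) if q ∤ d+1, and -1 - (1/q)((1-d)/q) if q | d+1; c₂(q) symmetric with d ↔ -d reversed; c₁₂(q) = -1 - (1/q)(((1+d)/q) + ((1-d)/q)). -/
/-- Local factor `c(q)`. -/
noncomputable def cFac (d q : ℕ) : ℚ :=
  if q ∣ d - 1 ∨ q ∣ d + 1 then (q : ℚ) - 2 - 1 / q else (q : ℚ) - 2 - 2 / q

/-- Local factor `c₁(q)`. -/
noncomputable def c1Fac (d q : ℕ) : ℚ :=
  if q ∣ d + 1 then -1 - (1 / q) * (jacobiSym (1 - (d : ℤ)) q : ℚ)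
  else -(jacobiSym (-(d : ℤ)) q : ℚ) - (1 / q) * (1 + (jacobiSym (1 - (d : ℤ)) q : ℚ))

/-- Local factor `c₂(q)`. -/
noncomputable def c2Fac (d q : ℕ) : ℚ :=
  if q ∣ d - 1 then -1 - (1 / q) * (jacobiSym (1 + (d : ℤ)) q : ℚ)
  else -(jacobiSym (d : ℤ) q : ℚ) - (1 / q) * (1 + (jacobiSym (1 + (d : ℤ)) q : ℚ))

/-- Local factor `c₁₂(q)`. -/
noncomputable def c12Fac (d q : ℕ) : ℚ :=
  -1 - (1 / q) * ((jacobiSym (1 + (d : ℤ)) q : ℚ) + (jacobiSym (1 - (d : ℤ)) q : ℚ))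

/-
Writing the indicator of `(x/g) = ε` as `((x/g)² + ε (x/g)) / 2` splits the sum into four sums of
`W(a - 1) W(a + d - 1) (a/g)^e₁ ((a + d)/g)^e₂` with `e₁, e₂ ∈ {1, 2}` and
`W(x) = ∏_{p ∣ (x, g)} (1 - 1/p)`; the exponent `2` turns the Jacobi symbol into the principal
character. Each summand is `g`-periodic and multiplicative in `g`, so by the Chinese remainder
theorem each sum is multiplicative in `g` and factors over the primes `q ∣ g`. Modulo `q` the
weights only change the two residues `a ≡ 1` and `a ≡ 1 - d`, and the complete sum that is left
is the shifted Jacobi sum `χ^e₁(-d) χ^e₂(d) J(χ^e₁, χ^e₂)` of the quadratic character `χ`,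
which `J(1, 1) = q - 2`, `J(1, χ) = -1` and `J(χ, χ) = -χ(-1)` evaluate to the local factors.
-/

open Finset Function

theorem sum_range_eq_sum_zmod {R : Type*} [AddCommMonoid R] (n : ℕ) [NeZero n] (f : ℕ → R) :
    ∑ a ∈ range n, f a = ∑ y : ZMod n, f y.val := by
  obtain ⟨k, rfl⟩ := Nat.exists_eq_succ_of_ne_zero (NeZero.ne n)
  exact (Fin.sum_univ_eq_sum_range f _).symm

namespace Function.Periodic

variable {R : Type*} {F : ℤ → R} {n : ℕ}

theorem eq_of_natCast_zmod_eq (hF : Periodic F n) {a b : ℕ} (h : (a : ZMod n) = b) :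
    F a = F b := by
  obtain ⟨k, hk⟩ := (ZMod.intCast_eq_intCast_iff_dvd_sub b a n).mp (mod_cast h.symm)
  rw [show (a : ℤ) = b + k * n by linear_combination hk]
  exact hF.int_mul k b

theorem sum_Icc_one_eq_sum_range_s17 [AddCancelCommMonoid R] (hF : Periodic F n) :
    ∑ a ∈ Icc 1 n, F a = ∑ a ∈ range n, F a := by
  have hshift := sum_range_succ' (fun a : ℕ => F a) n
  rw [sum_range_succ, Nat.cast_zero, ← zero_add (n : ℤ), hF 0] at hshift
  rw [← Finset.Ico_add_one_right_eq_Icc, sum_Ico_eq_sum_range, add_tsub_cancel_right]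
  simpa only [add_comm 1] using (add_right_cancel hshift).symm

theorem sum_range_mul_of_coprime [CommSemiring R] {G : ℤ → R} {m : ℕ} (h : m.Coprime n)
    (hF : Periodic F m) (hG : Periodic G n) :
    ∑ a ∈ range (m * n), F a * G a = (∑ a ∈ range m, F a) * ∑ a ∈ range n, G a := by
  rcases eq_or_ne m 0 with rfl | hm
  · simp
  rcases eq_or_ne n 0 with rfl | hn
  · simp
  have : NeZero m := ⟨hm⟩
  have : NeZero n := ⟨hn⟩
  rw [sum_range_eq_sum_zmod, sum_range_eq_sum_zmod, sum_range_eq_sum_zmod, sum_mul_sum,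
    ← Fintype.sum_prod_type']
  refine Fintype.sum_equiv (ZMod.chineseRemainder h).toEquiv _ _ fun y => ?_
  obtain ⟨k, rfl⟩ : ∃ k : ℕ, (k : ZMod (m * n)) = y := ⟨y.val, ZMod.natCast_zmod_val y⟩
  have hcrt : ZMod.chineseRemainder h k = ((k : ZMod m), (k : ZMod n)) := map_natCast _ k
  simp only [RingEquiv.toEquiv_eq_coe, EquivLike.coe_coe, hcrt]
  congr 1
  · exact hF.eq_of_natCast_zmod_eq (by
      simp only [ZMod.natCast_val, ZMod.cast_natCast (dvd_mul_right m n), ZMod.cast_id', id])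
  · exact hG.eq_of_natCast_zmod_eq (by
      simp only [ZMod.natCast_val, ZMod.cast_natCast (dvd_mul_left n m), ZMod.cast_id', id])

end Function.Periodic

noncomputable def gcdWeight (n : ℕ) (x : ℤ) : ℚ :=
  ∏ p ∈ (Int.gcd x n).primeFactors, (1 - 1 / (p : ℚ))

namespace gcdWeight

theorem periodic (n : ℕ) : Periodic (gcdWeight n) n := fun x => by
  simp only [gcdWeight, Int.gcd_add_self_left]

theorem mul {m n : ℕ} (h : m.Coprime n) (hm : m ≠ 0) (hn : n ≠ 0) (x : ℤ) :
    gcdWeight (m * n) x = gcdWeight m x * gcdWeight n x := by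
  have hgcd : Int.gcd x (m * n : ℕ) = Int.gcd x m * Int.gcd x n := h.gcd_mul x.natAbs
  have hcop : (Int.gcd x m).Coprime (Int.gcd x n) :=
    (h.coprime_dvd_left (Nat.gcd_dvd_right ..)).coprime_dvd_right (Nat.gcd_dvd_right ..)
  rw [gcdWeight, hgcd, Nat.primeFactors_mul (Int.gcd_ne_zero_right (by simpa))
      (Int.gcd_ne_zero_right (by simpa)), prod_union hcop.disjoint_primeFactors]
  rfl

theorem apply_prime {q : ℕ} (hq : q.Prime) (x : ℤ) :
    gcdWeight q x = if (x : ZMod q) = 0 then 1 - 1 / (q : ℚ) else 1 := by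
  have hgcd : Int.gcd x q = Nat.gcd x.natAbs q := rfl
  split_ifs with h <;> rw [ZMod.intCast_zmod_eq_zero_iff_dvd, Int.ofNat_dvd_left] at h
  · rw [gcdWeight, hgcd, Nat.gcd_eq_right h, hq.primeFactors, prod_singleton]
  · rw [gcdWeight, hgcd, Nat.Coprime.gcd_eq_one ((hq.coprime_iff_not_dvd.mpr h).symm),
      Nat.primeFactors_one, prod_empty]

theorem natCast_sub_one {a n : ℕ} (ha : 1 ≤ a) :
    gcdWeight n ((a : ℤ) - 1) = ∏ p ∈ (Nat.gcd (a - 1) n).primeFactors, (1 - 1 / (p : ℚ)) := by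
  rw [gcdWeight, ← Nat.cast_one, ← Nat.cast_sub ha, Int.gcd_natCast_natCast]

end gcdWeight

noncomputable def weightedJacobiTerm (d e₁ e₂ n : ℕ) (x : ℤ) : ℚ :=
  gcdWeight n (x - 1) * gcdWeight n (x + d - 1) *
    (jacobiSym x n : ℚ) ^ e₁ * (jacobiSym (x + d) n : ℚ) ^ e₂

namespace weightedJacobiTerm

variable (d e₁ e₂ : ℕ)

theorem periodic (n : ℕ) : Periodic (weightedJacobiTerm d e₁ e₂ n) n := fun x => by
  have hJ (y : ℤ) : jacobiSym (y + n) n = jacobiSym y n :=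
    jacobiSym.mod_left' (Int.add_emod_right y n)
  rw [weightedJacobiTerm, weightedJacobiTerm, show x + n - 1 = x - 1 + n by ring,
    show x + n + d = x + d + n by ring, show x + d + n - 1 = x + d - 1 + n by ring,
    gcdWeight.periodic, gcdWeight.periodic, hJ, hJ]

theorem mul {m n : ℕ} (h : m.Coprime n) (hm : m ≠ 0) (hn : n ≠ 0) (x : ℤ) :
    weightedJacobiTerm d e₁ e₂ (m * n) x =
      weightedJacobiTerm d e₁ e₂ m x * weightedJacobiTerm d e₁ e₂ n x := by
  simp only [weightedJacobiTerm, gcdWeight.mul h hm hn, jacobiSym.mul_right' _ hm hn,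
    Int.cast_mul]
  ring

end weightedJacobiTerm

noncomputable def weightedJacobiSum (d e₁ e₂ : ℕ) : ArithmeticFunction ℚ :=
  ⟨fun n => ∑ a ∈ range n, weightedJacobiTerm d e₁ e₂ n a, by simp⟩

theorem weightedJacobiSum_apply (d e₁ e₂ n : ℕ) :
    weightedJacobiSum d e₁ e₂ n = ∑ a ∈ range n, weightedJacobiTerm d e₁ e₂ n a := rfl

theorem isMultiplicative_weightedJacobiSum (d e₁ e₂ : ℕ) :
    (weightedJacobiSum d e₁ e₂).IsMultiplicative := by
  refine ArithmeticFunction.IsMultiplicative.iff_ne_zero.mpr ⟨?_, fun hm hn h => ?_⟩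
  · simp [weightedJacobiSum_apply, weightedJacobiTerm, gcdWeight, jacobiSym.one_right]
  · simp only [weightedJacobiSum_apply, weightedJacobiTerm.mul d e₁ e₂ h hm hn]
    exact (weightedJacobiTerm.periodic d e₁ e₂ _).sum_range_mul_of_coprime h
      (weightedJacobiTerm.periodic d e₁ e₂ _)

theorem MulChar.sum_mul_apply_add {F R : Type*} [Field F] [Fintype F] [CommRing R]
    (ψ₁ ψ₂ : MulChar F R) {δ : F} (hδ : δ ≠ 0) :
    ∑ y, ψ₁ y * ψ₂ (y + δ) = ψ₁ (-δ) * ψ₂ δ * jacobiSum ψ₁ ψ₂ := by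
  rw [jacobiSum, mul_sum]
  refine (Fintype.sum_equiv (Equiv.mulLeft₀ (-δ) (neg_ne_zero.mpr hδ)) _ _ fun x => ?_).symm
  change _ = ψ₁ (-δ * x) * ψ₂ (-δ * x + δ)
  rw [show -δ * x + δ = δ * (1 - x) by ring, map_mul, map_mul]
  ring

theorem MulChar.one_apply_eq_ite {F R : Type*} [Field F] [DecidableEq F] [CommMonoidWithZero R]
    (z : F) : (1 : MulChar F R) z = if z = 0 then 0 else 1 := by
  split_ifs with h
  · rw [h, MulChar.map_zero]
  · exact MulChar.one_apply (Ne.isUnit h)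

theorem dvd_sub_one_iff_natCast_eq_one {q d : ℕ} (hqd : ¬ q ∣ d) : q ∣ d - 1 ↔ (d : ZMod q) = 1 := by
  have hd : 1 ≤ d := Nat.one_le_iff_ne_zero.mpr (by rintro rfl; exact hqd (dvd_zero q))
  rw [← ZMod.natCast_eq_zero_iff, Nat.cast_sub hd, Nat.cast_one, sub_eq_zero]

theorem dvd_add_one_iff_natCast_eq_neg_one {q d : ℕ} : q ∣ d + 1 ↔ (d : ZMod q) = -1 := by
  rw [← ZMod.natCast_eq_zero_iff, Nat.cast_add, Nat.cast_one, add_eq_zero_iff_eq_neg]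

section Prime

variable {q : ℕ} [hq : Fact q.Prime]

local notation "χ" => quadraticChar (ZMod q)

theorem jacobiSym_eq_quadraticChar_s17 (x : ℤ) : jacobiSym x q = χ x :=
  (jacobiSym.legendreSym.to_jacobiSym q x).symm

variable {d : ℕ}

theorem weightedJacobiTerm_prime {e₁ e₂ : ℕ} (he₁ : e₁ ≠ 0) (he₂ : e₂ ≠ 0) (hqd : ¬ q ∣ d)
    (x : ℤ) :
    weightedJacobiTerm d e₁ e₂ q x =
      (1 - (if (x : ZMod q) = 1 then 1 / (q : ℚ) else 0)
          - (if (x : ZMod q) = 1 - d then 1 / (q : ℚ) else 0)) *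
        (((χ ^ e₁) x * (χ ^ e₂) (x + d) : ℤ) : ℚ) := by
  have hδ : (d : ZMod q) ≠ 0 := (ZMod.natCast_eq_zero_iff d q).not.mpr hqd
  rw [weightedJacobiTerm, gcdWeight.apply_prime hq.out, gcdWeight.apply_prime hq.out,
    jacobiSym_eq_quadraticChar_s17, jacobiSym_eq_quadraticChar_s17, MulChar.pow_apply' _ he₁,
    MulChar.pow_apply' _ he₂]
  push_cast
  set y : ZMod q := (x : ZMod q)
  have h1 : y - 1 = 0 ↔ y = 1 := sub_eq_zero
  have h2 : y + d - 1 = 0 ↔ y = 1 - d := by constructor <;> intro h <;> linear_combination h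
  simp only [h1, h2]
  split_ifs with hy1 hy2 hy2
  · exact absurd (by linear_combination hy2 - hy1) hδ
  all_goals ring

theorem weightedJacobiSum_prime {e₁ e₂ : ℕ} (he₁ : e₁ ≠ 0) (he₂ : e₂ ≠ 0) (hqd : ¬ q ∣ d) :
    weightedJacobiSum d e₁ e₂ q =
      (((χ ^ e₁) (-d) * (χ ^ e₂) d * jacobiSum (χ ^ e₁) (χ ^ e₂) : ℤ) : ℚ)
        - 1 / q * (((χ ^ e₂) (1 + d) + (χ ^ e₁) (1 - d) : ℤ) : ℚ) := by
  have hδ : (d : ZMod q) ≠ 0 := (ZMod.natCast_eq_zero_iff d q).not.mpr hqd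
  rw [weightedJacobiSum_apply, sum_range_eq_sum_zmod q (fun a => weightedJacobiTerm d e₁ e₂ q a)]
  simp only [weightedJacobiTerm_prime he₁ he₂ hqd, Int.cast_natCast, ZMod.natCast_zmod_val,
    sub_mul, one_mul, sum_sub_distrib, ite_mul, zero_mul, sum_ite_eq', mem_univ, if_true]
  rw [← Int.cast_sum, MulChar.sum_mul_apply_add _ _ hδ, sub_add_cancel, map_one, map_one]
  push_cast
  ring

theorem weightedJacobiSum_two_two (hq2 : q ≠ 2) (hqd : ¬ q ∣ d) :
    weightedJacobiSum d 2 2 q = cFac d q := by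
  have h1 : (1 : ZMod q) ≠ -1 :=
    (Ring.neg_one_ne_one_of_char_ne_two (by rwa [ZMod.ringChar_zmod_n])).symm
  have hδ : (d : ZMod q) ≠ 0 := (ZMod.natCast_eq_zero_iff d q).not.mpr hqd
  rw [weightedJacobiSum_prime two_ne_zero two_ne_zero hqd,
    (quadraticChar_isQuadratic (ZMod q)).sq_eq_one, jacobiSum_one_one, ZMod.card, cFac]
  simp only [dvd_sub_one_iff_natCast_eq_one hqd, dvd_add_one_iff_natCast_eq_neg_one,
    MulChar.one_apply_eq_ite, neg_eq_zero, hδ, if_false, add_eq_zero_iff_eq_neg', sub_eq_zero]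
  generalize (d : ZMod q) = δ at hδ ⊢
  rcases em (δ = 1) with rfl | hδ₁
  · simp [h1]
  rcases em (δ = -1) with rfl | hδ₂
  · simp [h1]
  · simp only [hδ₁, Ne.symm hδ₁, hδ₂, if_false, or_self]
    push_cast
    ring

theorem weightedJacobiSum_one_two (hq2 : q ≠ 2) (hqd : ¬ q ∣ d) :
    weightedJacobiSum d 1 2 q = c1Fac d q := by
  have hχ : χ ≠ 1 := quadraticChar_ne_one (by rwa [ZMod.ringChar_zmod_n])
  have hδ : (d : ZMod q) ≠ 0 := (ZMod.natCast_eq_zero_iff d q).not.mpr hqd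
  rw [weightedJacobiSum_prime one_ne_zero two_ne_zero hqd, pow_one,
    (quadraticChar_isQuadratic (ZMod q)).sq_eq_one, jacobiSum_comm,
    jacobiSum_one_nontrivial hχ, c1Fac]
  simp only [dvd_add_one_iff_natCast_eq_neg_one, jacobiSym_eq_quadraticChar_s17,
    MulChar.one_apply_eq_ite, add_eq_zero_iff_eq_neg', Int.cast_sub, Int.cast_one, Int.cast_neg,
    Int.cast_natCast, hδ, if_false]
  generalize (d : ZMod q) = δ at hδ ⊢
  rcases em (δ = -1) with rfl | hδ₁
  · simp
  · simp [hδ₁]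

theorem weightedJacobiSum_two_one (hq2 : q ≠ 2) (hqd : ¬ q ∣ d) :
    weightedJacobiSum d 2 1 q = c2Fac d q := by
  have hχ : χ ≠ 1 := quadraticChar_ne_one (by rwa [ZMod.ringChar_zmod_n])
  have hδ : (d : ZMod q) ≠ 0 := (ZMod.natCast_eq_zero_iff d q).not.mpr hqd
  rw [weightedJacobiSum_prime two_ne_zero one_ne_zero hqd, pow_one,
    (quadraticChar_isQuadratic (ZMod q)).sq_eq_one, jacobiSum_one_nontrivial hχ, c2Fac]
  simp only [dvd_sub_one_iff_natCast_eq_one hqd, jacobiSym_eq_quadraticChar_s17,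
    MulChar.one_apply_eq_ite, sub_eq_zero, Int.cast_add, Int.cast_one, Int.cast_natCast,
    neg_eq_zero, hδ, if_false]
  generalize (d : ZMod q) = δ at hδ ⊢
  rcases em (δ = 1) with rfl | hδ₁
  · simp
  · simp only [hδ₁, Ne.symm hδ₁, if_false]
    push_cast
    ring

theorem weightedJacobiSum_one_one (hq2 : q ≠ 2) (hqd : ¬ q ∣ d) :
    weightedJacobiSum d 1 1 q = c12Fac d q := by
  have hχ : χ ≠ 1 := quadraticChar_ne_one (by rwa [ZMod.ringChar_zmod_n])
  have hδ : (d : ZMod q) ≠ 0 := (ZMod.natCast_eq_zero_iff d q).not.mpr hqd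
  have hJ : jacobiSum χ χ = -χ (-1) := by
    simpa only [(quadraticChar_isQuadratic (ZMod q)).inv] using jacobiSum_nontrivial_inv hχ
  have hsign : χ (-d) * χ d * -χ (-1) = -1 := by
    rw [neg_eq_neg_one_mul (d : ZMod q), map_mul]
    linear_combination (-(χ (-1)) ^ 2) * quadraticChar_sq_one hδ
      - quadraticChar_sq_one (neg_ne_zero.mpr (one_ne_zero (α := ZMod q)))
  rw [weightedJacobiSum_prime one_ne_zero one_ne_zero hqd, pow_one, hJ, hsign, c12Fac]
  simp only [jacobiSym_eq_quadraticChar_s17, Int.cast_add, Int.cast_sub, Int.cast_one,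
    Int.cast_natCast]
  push_cast
  ring

end Prime

theorem ite_eq_sq_add_mul_div_two {j ε : ℤ} (hj : j = 0 ∨ j = 1 ∨ j = -1)
    (hε : ε = 1 ∨ ε = -1) : (if j = ε then 1 else 0 : ℚ) = ((j : ℚ) ^ 2 + ε * j) / 2 := by
  rcases hj with rfl | rfl | rfl <;> rcases hε with rfl | rfl <;> norm_num

theorem ite_jacobiSym_eq_weightedJacobiTerm (d n : ℕ) {a : ℕ} (ha : 1 ≤ a) {ε₁ ε₂ : ℤ}
    (hε₁ : ε₁ = 1 ∨ ε₁ = -1) (hε₂ : ε₂ = 1 ∨ ε₂ = -1) :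
    (if jacobiSym a n = ε₁ ∧ jacobiSym (a + d) n = ε₂ then
        (∏ p ∈ (Nat.gcd (a - 1) n).primeFactors, (1 - 1 / (p : ℚ))) *
          ∏ p ∈ (Nat.gcd (a + d - 1) n).primeFactors, (1 - 1 / (p : ℚ))
      else 0) =
      1 / 4 * (weightedJacobiTerm d 2 2 n a + ε₁ * weightedJacobiTerm d 1 2 n a
        + ε₂ * weightedJacobiTerm d 2 1 n a + ε₁ * ε₂ * weightedJacobiTerm d 1 1 n a) := by
  rw [← gcdWeight.natCast_sub_one ha, ← gcdWeight.natCast_sub_one (ha.trans (Nat.le_add_right a d)),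
    ← ite_zero_mul_ite_zero, ← mul_boole, ← mul_boole _ (gcdWeight n _),
    ite_eq_sq_add_mul_div_two (jacobiSym.trichotomy _ _) hε₁,
    ite_eq_sq_add_mul_div_two (jacobiSym.trichotomy _ _) hε₂]
  simp only [weightedJacobiTerm, Nat.cast_add]
  ring

theorem sum_Icc_weightedJacobiTerm_eq_prod {g d : ℕ} (hgodd : Odd g) (hgsf : Squarefree g)
    (hcop : g.Coprime d) (e₁ e₂ : ℕ) (c : ℕ → ℚ)
    (hc : ∀ {q : ℕ} [Fact q.Prime], q ≠ 2 → ¬ q ∣ d → weightedJacobiSum d e₁ e₂ q = c q) :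
    ∑ a ∈ Icc 1 g, weightedJacobiTerm d e₁ e₂ g a = ∏ q ∈ g.primeFactors, c q := by
  rw [(weightedJacobiTerm.periodic d e₁ e₂ g).sum_Icc_one_eq_sum_range_s17,
    ← weightedJacobiSum_apply,
    ← (isMultiplicative_weightedJacobiSum d e₁ e₂).prod_primeFactors hgsf]
  refine prod_congr rfl fun q hq => ?_
  have hqg := Nat.dvd_of_mem_primeFactors hq
  have hqp := Nat.prime_of_mem_primeFactors hq
  have : Fact q.Prime := ⟨hqp⟩
  exact hc (hgodd.ne_two_of_dvd_nat hqg) (hqp.coprime_iff_not_dvd.mp (hcop.coprime_dvd_left hqg))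

theorem stmt_17_general (g d : ℕ) (hgodd : Odd g) (hgsf : Squarefree g)
    (hcop : Nat.Coprime g d)
    (ε₁ ε₂ : ℤ) (hε₁ : ε₁ = 1 ∨ ε₁ = -1) (hε₂ : ε₂ = 1 ∨ ε₂ = -1) :
    ∑ a ∈ (Finset.Icc 1 g).filter
        (fun a : ℕ => jacobiSym (a : ℤ) g = ε₁ ∧ jacobiSym ((a : ℤ) + d) g = ε₂),
      (∏ p ∈ (Nat.gcd (a - 1) g).primeFactors, (1 - 1 / (p : ℚ))) *
        (∏ p ∈ (Nat.gcd (a + d - 1) g).primeFactors, (1 - 1 / (p : ℚ)))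
      = (1 / 4) *
          ((∏ q ∈ g.primeFactors, cFac d q)
            + (ε₁ : ℚ) * ∏ q ∈ g.primeFactors, c1Fac d q
            + (ε₂ : ℚ) * ∏ q ∈ g.primeFactors, c2Fac d q
            + (ε₁ : ℚ) * (ε₂ : ℚ) * ∏ q ∈ g.primeFactors, c12Fac d q) := by
  rw [sum_filter, sum_congr rfl fun a ha =>
      ite_jacobiSym_eq_weightedJacobiTerm d g (mem_Icc.mp ha).1 hε₁ hε₂,
    ← mul_sum, sum_add_distrib, sum_add_distrib, sum_add_distrib, ← mul_sum, ← mul_sum, ← mul_sum]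
  rw [sum_Icc_weightedJacobiTerm_eq_prod hgodd hgsf hcop 2 2 _ weightedJacobiSum_two_two,
    sum_Icc_weightedJacobiTerm_eq_prod hgodd hgsf hcop 1 2 _ weightedJacobiSum_one_two,
    sum_Icc_weightedJacobiTerm_eq_prod hgodd hgsf hcop 2 1 _ weightedJacobiSum_two_one,
    sum_Icc_weightedJacobiTerm_eq_prod hgodd hgsf hcop 1 1 _ weightedJacobiSum_one_one]

theorem stmt_17 (g d : ℕ) (hgodd : Odd g) (hgsf : Squarefree g)
    (hd : 0 < d) (hde : Even d) (hcop : Nat.Coprime g d)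
    (ε₁ ε₂ : ℤ) (hε₁ : ε₁ = 1 ∨ ε₁ = -1) (hε₂ : ε₂ = 1 ∨ ε₂ = -1) :
    ∑ a ∈ (Finset.Icc 1 g).filter
        (fun a : ℕ => jacobiSym (a : ℤ) g = ε₁ ∧ jacobiSym ((a : ℤ) + d) g = ε₂),
      (∏ p ∈ (Nat.gcd (a - 1) g).primeFactors, (1 - 1 / (p : ℚ))) *
        (∏ p ∈ (Nat.gcd (a + d - 1) g).primeFactors, (1 - 1 / (p : ℚ)))
      = (1 / 4) *
          ((∏ q ∈ g.primeFactors, cFac d q)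
            + (ε₁ : ℚ) * ∏ q ∈ g.primeFactors, c1Fac d q
            + (ε₂ : ℚ) * ∏ q ∈ g.primeFactors, c2Fac d q
            + (ε₁ : ℚ) * (ε₂ : ℚ) * ∏ q ∈ g.primeFactors, c12Fac d q) :=
  stmt_17_general g d hgodd hgsf hcop ε₁ ε₂ hε₁ hε₂
end

section
/- Let g be a nonzero integer that is not -1 and not a perfect power, written g = g₀·g_s² with g₀ squarefree, and d a positive even integer. If g₀ divides d, d ≡ 2 mod 4, and g₀ ≡ 3 mod 4, then there is no odd prime p such that g is a primitive root mod both p and p+d; in fact (g/n) = ((g)/(n+d)) = -1 fails for every odd n coprime to g_s. -/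
/-!
Write `g = g₀ s²`. Whenever `J(g | n) = -1`, also `J(g₀ | n) = -1`. For `g₀ ≡ 3 (mod 4)`, quadratic
reciprocity gives `J(g₀ | n) = χ₄(n) J(n | |g₀|)` for odd `n`. Shifting `n` by `d` leaves the second
factor unchanged because `|g₀| ∣ d`, and flips `χ₄` because `d ≡ 2 (mod 4)`; so `J(g₀ | n)` and
`J(g₀ | n + d)` have opposite signs. A primitive root modulo an odd prime is a non-residue, so `g`
cannot be one modulo both `p` and `p + d`.
-/

open ZMod
open scoped NumberTheorySymbols

theorem FiniteField.not_isSquare_of_orderOf_eq_card_sub_one {F : Type*} [Field F] [Fintype F]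
    (hF : ringChar F ≠ 2) {a : F} (ha : orderOf a = Fintype.card F - 1) : ¬IsSquare a := by
  have hcard := FiniteField.odd_card_of_char_ne_two hF
  have hone : 1 < Fintype.card F := Fintype.one_lt_card
  have ha0 : a ≠ 0 := by
    rintro rfl
    rw [orderOf_zero] at ha
    omega
  intro hsq
  have hdvd := orderOf_dvd_of_pow_eq_one ((FiniteField.isSquare_iff hF ha0).mp hsq)
  rw [ha] at hdvd
  have := Nat.le_of_dvd (Nat.div_pos (by omega) two_pos) hdvd
  omega

theorem jacobiSym_eq_neg_one_of_orderOf_eq_sub_one {g : ℤ} {p : ℕ} [Fact p.Prime] (hp : p ≠ 2)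
    (hg : orderOf (g : ZMod p) = p - 1) : J(g | p) = -1 := by
  rw [← jacobiSym.legendreSym.to_jacobiSym, legendreSym.eq_neg_one_iff]
  refine FiniteField.not_isSquare_of_orderOf_eq_card_sub_one ?_ (by rwa [ZMod.card])
  rwa [ZMod.ringChar_zmod_n]

theorem jacobiSym_eq_χ₄_mul_of_emod_four_eq_three {a : ℤ} {n : ℕ} (ha : a % 4 = 3) (hn : Odd n) :
    J(a | n) = χ₄ n * J(n | a.natAbs) := by
  rcases Int.natAbs_eq a with h | h <;> nth_rw 1 [h] at ha ⊢
  · have hm : a.natAbs % 4 = 3 := by omega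
    rw [jacobiSym.quadratic_reciprocity' (Nat.odd_iff.mpr (by omega)) hn,
      qrSign.symm hn (Nat.odd_iff.mpr (by omega)), qrSign, χ₄_nat_three_mod_four hm,
      jacobiSym.at_neg_one hn]
  · rw [jacobiSym.neg _ hn, jacobiSym.quadratic_reciprocity_one_mod_four (by omega) hn]

theorem χ₄_nat_add_of_mod_four_eq_two {n d : ℕ} (hn : Odd n) (hd : d % 4 = 2) :
    χ₄ (n + d : ℕ) = -χ₄ n := by
  rcases Nat.odd_mod_four_iff.mp (Nat.odd_iff.mp hn) with h | h
  · rw [χ₄_nat_one_mod_four h, χ₄_nat_three_mod_four (by omega)]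
  · rw [χ₄_nat_three_mod_four h, χ₄_nat_one_mod_four (by omega), neg_neg]

theorem jacobiSym_add_of_dvd_of_emod_four_eq_three {a : ℤ} {n d : ℕ} (ha : a % 4 = 3)
    (hdvd : a ∣ d) (hd : d % 4 = 2) (hn : Odd n) : J(a | n + d) = -J(a | n) := by
  have hnd : Odd (n + d) := hn.add_even (Nat.even_iff.mpr (by omega))
  have hshift : J((n + d : ℕ) | a.natAbs) = J(n | a.natAbs) := by
    obtain ⟨c, hc⟩ := (abs_dvd a d).mpr hdvd
    refine jacobiSym.mod_left' ?_
    push_cast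
    rw [hc, Int.add_mul_emod_self_left]
  rw [jacobiSym_eq_χ₄_mul_of_emod_four_eq_three ha hn,
    jacobiSym_eq_χ₄_mul_of_emod_four_eq_three ha hnd, hshift, χ₄_nat_add_of_mod_four_eq_two hn hd,
    neg_mul]

theorem jacobiSym_eq_neg_one_of_mul_sq {a s : ℤ} {n : ℕ} (h : J(a * s ^ 2 | n) = -1) :
    J(a | n) = -1 := by
  rw [jacobiSym.mul_left, jacobiSym.pow_left] at h
  rcases jacobiSym.trichotomy s n with hs | hs | hs <;> simp_all

theorem not_jacobiSym_mul_sq_eq_neg_one_and_add {a s : ℤ} {n d : ℕ} (ha : a % 4 = 3)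
    (hdvd : a ∣ d) (hd : d % 4 = 2) (hn : Odd n) :
    ¬(J(a * s ^ 2 | n) = -1 ∧ J(a * s ^ 2 | n + d) = -1) := by
  rintro ⟨h, h'⟩
  have hflip := jacobiSym_add_of_dvd_of_emod_four_eq_three ha hdvd hd hn
  rw [jacobiSym_eq_neg_one_of_mul_sq h, jacobiSym_eq_neg_one_of_mul_sq h'] at hflip
  norm_num at hflip

theorem stmt_18_general (g g₀ gs : ℤ) (d : ℕ)
    (hfac : g = g₀ * gs ^ 2)
    (hdvd : g₀ ∣ (d : ℤ)) (hd4 : d % 4 = 2) (hg4 : g₀ % 4 = 3) :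
    (∀ n : ℕ, Odd n → IsCoprime (n : ℤ) gs →
        ¬ (jacobiSym g n = -1 ∧ jacobiSym g (n + d) = -1)) ∧
    ¬ ∃ p : ℕ, p.Prime ∧ p ≠ 2 ∧ (p + d).Prime ∧
        orderOf ((g : ZMod p)) = p - 1 ∧
        orderOf ((g : ZMod (p + d))) = (p + d) - 1 := by
  subst hfac
  refine ⟨fun n hn _ => not_jacobiSym_mul_sq_eq_neg_one_and_add hg4 hdvd hd4 hn, ?_⟩
  rintro ⟨p, hp, hp2, hpd, hord, hord'⟩
  have := Fact.mk hp
  have := Fact.mk hpd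
  have hpd2 : p + d ≠ 2 := by have := hp.two_le; omega
  exact not_jacobiSym_mul_sq_eq_neg_one_and_add hg4 hdvd hd4 (hp.odd_of_ne_two hp2)
    ⟨jacobiSym_eq_neg_one_of_orderOf_eq_sub_one hp2 hord,
      jacobiSym_eq_neg_one_of_orderOf_eq_sub_one hpd2 hord'⟩

theorem stmt_18 (g g₀ gs : ℤ) (d : ℕ)
    (hfac : g = g₀ * gs ^ 2) (hsf : Squarefree g₀)
    (h0 : g ≠ 0) (h1 : g ≠ 1) (hm1 : g ≠ -1)
    (hpow : ∀ (b : ℤ) (k : ℕ), 2 ≤ k → g ≠ b ^ k)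
    (hd : 0 < d) (hde : Even d)
    (hdvd : g₀ ∣ (d : ℤ)) (hd4 : d % 4 = 2) (hg4 : g₀ % 4 = 3) :
    (∀ n : ℕ, Odd n → IsCoprime (n : ℤ) gs →
        ¬ (jacobiSym g n = -1 ∧ jacobiSym g (n + d) = -1)) ∧
    ¬ ∃ p : ℕ, p.Prime ∧ p ≠ 2 ∧ (p + d).Prime ∧
        orderOf ((g : ZMod p)) = p - 1 ∧
        orderOf ((g : ZMod (p + d))) = (p + d) - 1 :=
  stmt_18_general g g₀ gs d hfac hdvd hd4 hg4
end
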